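/- arXiv:1609.08870 — 6 statements merged into one kernel-verified Lean document; each statement's English description precedes it below -/
import Mathlib

section
/- In any generalized quitting game, if a closed convex set C ⊆ ℝ^d does not satisfy Condition (3) (i.e., the quantity in Condition (3) is strictly positive), then C is weakly excludable by player 2; consequently, if C is weakly approachable by player 1, then C satisfies Condition (3). -/
open scoped BigOperators

noncomputable section

/-- A generalized quitting game: finite action sets `I` (player 1) and `J` (player 2),
each partitioned into non-quitting and quitting actions via the Boolean predicates
`Istar`, `Jstar` (`true` = quitting), and a vector payoff function `g`. -/
structure GQGame (I J : Type) (d : ℕ) where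
  Istar : I → Bool
  Jstar : J → Bool
  g : I → J → EuclideanSpace ℝ (Fin d)

namespace GQGame

variable {I J : Type} {d : ℕ} [Fintype I] [Fintype J]

/-- Multilinear extension of the payoff function. -/
def mix (G : GQGame I J d) (x : I → ℝ) (y : J → ℝ) : EuclideanSpace ℝ (Fin d) :=
  ∑ i, ∑ j, (x i * y j) • G.g i j

/-- Linear extension of the payoff against a fixed pure action `j` of player 2. -/
def mixL (G : GQGame I J d) (x : I → ℝ) (j : J) : EuclideanSpace ℝ (Fin d) :=
  ∑ i, x i • G.g i j

/-- Measure of absorption `p*`. -/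
def pstar (G : GQGame I J d) (α : I → ℝ) (β : J → ℝ) : ℝ :=
  ∑ i, ∑ j, if G.Istar i || G.Jstar j then α i * β j else 0

/-- Expected absorption payoff `g*`. -/
def gstar (G : GQGame I J d) (α : I → ℝ) (β : J → ℝ) : EuclideanSpace ℝ (Fin d) :=
  ∑ i, ∑ j, if G.Istar i || G.Jstar j then (α i * β j) • G.g i j else 0

/-- The function φ(x,α,y,β) appearing in the approachability conditions. -/
def phi (G : GQGame I J d) (x α : I → ℝ) (y β : J → ℝ) : EuclideanSpace ℝ (Fin d) :=
  (1 + G.pstar α y + G.pstar x β)⁻¹ • (G.mix x y + G.gstar α y + G.gstar x β)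

/-- The value featuring in Condition (1):
`max_y min_x inf_α sup_β d_C(φ(x,α,y,β))`. -/
def cond1Val (G : GQGame I J d) (C : Set (EuclideanSpace ℝ (Fin d))) : ℝ :=
  ⨆ y : stdSimplex ℝ J, ⨅ x : stdSimplex ℝ I,
    ⨅ α : {a : I → ℝ // ∀ i, 0 ≤ a i}, ⨆ β : {b : J → ℝ // ∀ j, 0 ≤ b j},
      Metric.infDist (G.phi x.1 α.1 y.1 β.1) C

/-- The value featuring in Condition (2):
`max_y min_x sup_β inf_α d_C(φ(x,α,y,β))`. -/
def cond2Val (G : GQGame I J d) (C : Set (EuclideanSpace ℝ (Fin d))) : ℝ :=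
  ⨆ y : stdSimplex ℝ J, ⨅ x : stdSimplex ℝ I,
    ⨆ β : {b : J → ℝ // ∀ j, 0 ≤ b j}, ⨅ α : {a : I → ℝ // ∀ i, 0 ≤ a i},
      Metric.infDist (G.phi x.1 α.1 y.1 β.1) C

/-- The value featuring in Condition (3):
`max_y sup_β min_x inf_α d_C(φ(x,α,y,β))`. -/
def cond3Val (G : GQGame I J d) (C : Set (EuclideanSpace ℝ (Fin d))) : ℝ :=
  ⨆ y : stdSimplex ℝ J, ⨆ β : {b : J → ℝ // ∀ j, 0 ≤ b j},
    ⨅ x : stdSimplex ℝ I, ⨅ α : {a : I → ℝ // ∀ i, 0 ≤ a i},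
      Metric.infDist (G.phi x.1 α.1 y.1 β.1) C

/-- A (behavioral) strategy of player 1: a mixed action after every finite history. -/
abbrev Strat1 (I J : Type) [Fintype I] : Type := List (I × J) → stdSimplex ℝ I

/-- A (behavioral) strategy of player 2. -/
abbrev Strat2 (I J : Type) [Fintype J] : Type := List (I × J) → stdSimplex ℝ J

/-- Expected sum of the payoffs of the next `n` stages, given the unabsorbed history `h`:
if an absorbing action pair is played, the payoff is frozen for all remaining stages. -/
def expTotal (G : GQGame I J d) (σ : Strat1 I J) (τ : Strat2 I J) :
    ℕ → List (I × J) → EuclideanSpace ℝ (Fin d)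
  | 0, _ => 0
  | n + 1, h =>
      ∑ i, ∑ j,
        (((σ h : I → ℝ) i) * ((τ h : J → ℝ) j)) •
          (if G.Istar i || G.Jstar j then ((n : ℝ) + 1) • G.g i j
           else G.g i j + G.expTotal σ τ n (h ++ [(i, j)]))

/-- Expected average payoff `E_{σ,τ}[(1/T) Σ_{t=1}^T g(i_t,j_t)]`. -/
def avg (G : GQGame I J d) (σ : Strat1 I J) (τ : Strat2 I J) (T : ℕ) :
    EuclideanSpace ℝ (Fin d) :=
  (T : ℝ)⁻¹ • G.expTotal σ τ T []

/-- `C` is weakly approachable by player 1. -/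
def WeaklyApproachable1 (G : GQGame I J d) (C : Set (EuclideanSpace ℝ (Fin d))) : Prop :=
  ∀ ε > (0 : ℝ), ∃ T₀ : ℕ, ∀ T ≥ T₀, ∃ σ : Strat1 I J, ∀ τ : Strat2 I J,
    Metric.infDist (G.avg σ τ T) C ≤ ε

/-- `C` is weakly excludable by player 2: for some `δ > 0`, player 2 can weakly approach
the set of points at distance at least `δ` from `C`. -/
def WeaklyExcludable2 (G : GQGame I J d) (C : Set (EuclideanSpace ℝ (Fin d))) : Prop :=
  ∃ δ > (0 : ℝ), ∀ ε > (0 : ℝ), ∃ T₀ : ℕ, ∀ T ≥ T₀, ∃ τ : Strat2 I J, ∀ σ : Strat1 I J,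
    Metric.infDist (G.avg σ τ T) {z | δ ≤ Metric.infDist z C} ≤ ε

/-- `C` is uniformly approachable by player 1. -/
def UniformlyApproachable1 (G : GQGame I J d) (C : Set (EuclideanSpace ℝ (Fin d))) : Prop :=
  ∀ ε > (0 : ℝ), ∃ σ : Strat1 I J, ∃ T₀ : ℕ, ∀ T ≥ T₀, ∀ τ : Strat2 I J,
    Metric.infDist (G.avg σ τ T) C ≤ ε

end GQGame


/- ===================== auxiliary development ===================== -/

namespace GQGame

variable {I J : Type} {d : ℕ} [Fintype I] [Fintype J]

section LinHelp
variable {E : Type} [AddCommGroup E] [Module ℝ E]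

lemma lin_add' (v : I → E) (a b : I → ℝ) :
    ∑ i, (a i + b i) • v i = (∑ i, a i • v i) + ∑ i, b i • v i := by
  simp [add_smul, Finset.sum_add_distrib]

lemma lin_smul' (v : I → E) (t : ℝ) (a : I → ℝ) :
    ∑ i, (t * a i) • v i = t • ∑ i, a i • v i := by
  simp [mul_smul, Finset.smul_sum]

lemma lin_sum' (v : I → E) {κ : Type} (u : Finset κ) (F : κ → I → ℝ) :
    ∑ i, (∑ k ∈ u, F k i) • v i = ∑ k ∈ u, ∑ i, (F k i) • v i := by
  rw [Finset.sum_comm]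
  exact Finset.sum_congr rfl fun i _ => Finset.sum_smul

lemma lin_comb' (v : I → E) {κ : Type} [Fintype κ] (t : ℝ) (a : I → ℝ) (w : κ → ℝ)
    (F : κ → I → ℝ) :
    ∑ i, (t * a i + ∑ k, w k * F k i) • v i
      = t • (∑ i, a i • v i) + ∑ k, w k • ∑ i, (F k i) • v i := by
  rw [lin_add', lin_smul', lin_sum']
  congr 1
  exact Finset.sum_congr rfl fun k _ => lin_smul' v (w k) (F k)

end LinHelp

variable (G : GQGame I J d)

lemma mix_apply' (x : I → ℝ) (y : J → ℝ) :
    G.mix x y = ∑ i, x i • (∑ j, y j • G.g i j) := by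
  unfold mix
  refine Finset.sum_congr rfl fun i _ => ?_
  rw [Finset.smul_sum]
  exact Finset.sum_congr rfl fun j _ => mul_smul _ _ _

lemma gstar_apply' (x : I → ℝ) (y : J → ℝ) :
    G.gstar x y = ∑ i, x i • (∑ j, if G.Istar i || G.Jstar j then y j • G.g i j else 0) := by
  unfold gstar
  refine Finset.sum_congr rfl fun i _ => ?_
  rw [Finset.smul_sum]
  refine Finset.sum_congr rfl fun j _ => ?_
  split <;> simp [mul_smul]

lemma pstar_apply' (x : I → ℝ) (y : J → ℝ) :
    G.pstar x y = ∑ i, x i • (∑ j, if G.Istar i || G.Jstar j then y j else 0) := by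
  unfold pstar
  refine Finset.sum_congr rfl fun i _ => ?_
  rw [Finset.smul_sum]
  refine Finset.sum_congr rfl fun j _ => ?_
  split <;> simp

lemma mix_comb {κ : Type} [Fintype κ] (t : ℝ) (a : I → ℝ) (w : κ → ℝ) (F : κ → I → ℝ)
    (y : J → ℝ) :
    G.mix (fun i' => t * a i' + ∑ k, w k * F k i') y
      = t • G.mix a y + ∑ k, w k • G.mix (F k) y := by
  simp only [mix_apply']
  exact lin_comb' _ t a w F

lemma gstar_comb {κ : Type} [Fintype κ] (t : ℝ) (a : I → ℝ) (w : κ → ℝ) (F : κ → I → ℝ)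
    (y : J → ℝ) :
    G.gstar (fun i' => t * a i' + ∑ k, w k * F k i') y
      = t • G.gstar a y + ∑ k, w k • G.gstar (F k) y := by
  simp only [gstar_apply']
  exact lin_comb' _ t a w F

lemma pstar_comb {κ : Type} [Fintype κ] (t : ℝ) (a : I → ℝ) (w : κ → ℝ) (F : κ → I → ℝ)
    (y : J → ℝ) :
    G.pstar (fun i' => t * a i' + ∑ k, w k * F k i') y
      = t * G.pstar a y + ∑ k, w k * G.pstar (F k) y := by
  simp only [pstar_apply']
  simpa [smul_eq_mul] using lin_comb' (fun i => ∑ j, if G.Istar i || G.Jstar j then y j else 0)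
    t a w F

lemma mix_smul_left (t : ℝ) (a : I → ℝ) (y : J → ℝ) :
    G.mix (t • a) y = t • G.mix a y := by
  simp only [mix_apply', Pi.smul_apply, smul_eq_mul]
  exact lin_smul' _ t a

lemma gstar_smul_left (t : ℝ) (a : I → ℝ) (y : J → ℝ) :
    G.gstar (t • a) y = t • G.gstar a y := by
  simp only [gstar_apply', Pi.smul_apply, smul_eq_mul]
  exact lin_smul' _ t a

lemma pstar_smul_left (t : ℝ) (a : I → ℝ) (y : J → ℝ) :
    G.pstar (t • a) y = t * G.pstar a y := by
  simp only [pstar_apply', Pi.smul_apply, smul_eq_mul]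
  simpa [smul_eq_mul] using lin_smul'
    (fun i => ∑ j, if G.Istar i || G.Jstar j then y j else 0) t a

lemma mix_right_decomp (x : I → ℝ) (y β z : J → ℝ) (c m : ℝ)
    (hz : ∀ j, z j = c⁻¹ * (y j + m⁻¹ * β j)) :
    G.mix x z = c⁻¹ • G.mix x y + (c⁻¹ * m⁻¹) • G.mix x β := by
  unfold mix
  rw [Finset.smul_sum, Finset.smul_sum, ← Finset.sum_add_distrib]
  refine Finset.sum_congr rfl fun i _ => ?_
  rw [Finset.smul_sum, Finset.smul_sum, ← Finset.sum_add_distrib]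
  refine Finset.sum_congr rfl fun j _ => ?_
  rw [smul_smul, smul_smul, ← add_smul]
  congr 1
  rw [hz]; ring

lemma gstar_right_decomp (x : I → ℝ) (y β z : J → ℝ) (c m : ℝ)
    (hz : ∀ j, z j = c⁻¹ * (y j + m⁻¹ * β j)) :
    G.gstar x z = c⁻¹ • G.gstar x y + (c⁻¹ * m⁻¹) • G.gstar x β := by
  unfold gstar
  rw [Finset.smul_sum, Finset.smul_sum, ← Finset.sum_add_distrib]
  refine Finset.sum_congr rfl fun i _ => ?_
  rw [Finset.smul_sum, Finset.smul_sum, ← Finset.sum_add_distrib]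
  refine Finset.sum_congr rfl fun j _ => ?_
  split
  · rw [smul_smul, smul_smul, ← add_smul]
    congr 1
    rw [hz]; ring
  · simp

lemma pstar_right_decomp (x : I → ℝ) (y β z : J → ℝ) (c m : ℝ)
    (hz : ∀ j, z j = c⁻¹ * (y j + m⁻¹ * β j)) :
    G.pstar x z = c⁻¹ * G.pstar x y + (c⁻¹ * m⁻¹) * G.pstar x β := by
  unfold pstar
  rw [Finset.mul_sum, Finset.mul_sum, ← Finset.sum_add_distrib]
  refine Finset.sum_congr rfl fun i _ => ?_
  rw [Finset.mul_sum, Finset.mul_sum, ← Finset.sum_add_distrib]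
  refine Finset.sum_congr rfl fun j _ => ?_
  split
  · rw [hz]; ring
  · simp

lemma mix_zero_left (y : J → ℝ) : G.mix (fun _ => (0:ℝ)) y = 0 := by simp [mix]
lemma gstar_zero_left (y : J → ℝ) : G.gstar (fun _ => (0:ℝ)) y = 0 := by simp [gstar]
lemma pstar_zero_left (y : J → ℝ) : G.pstar (fun _ => (0:ℝ)) y = 0 := by simp [pstar]

lemma pstar_nonneg (x : I → ℝ) (y : J → ℝ) (hx : ∀ i, 0 ≤ x i) (hy : ∀ j, 0 ≤ y j) :
    0 ≤ G.pstar x y := by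
  refine Finset.sum_nonneg fun i _ => Finset.sum_nonneg fun j _ => ?_
  split
  · exact mul_nonneg (hx i) (hy j)
  · exact le_refl 0

lemma pstar_le_sums (x : I → ℝ) (y : J → ℝ) (hx : ∀ i, 0 ≤ x i) (hy : ∀ j, 0 ≤ y j) :
    G.pstar x y ≤ (∑ i, x i) * (∑ j, y j) := by
  rw [Finset.sum_mul_sum]
  refine Finset.sum_le_sum fun i _ => Finset.sum_le_sum fun j _ => ?_
  split
  · exact le_refl _
  · exact mul_nonneg (hx i) (hy j)

lemma norm_mix_le (hg : ∀ i j, ‖G.g i j‖ ≤ 1) (x : I → ℝ) (y : J → ℝ)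
    (hx : ∀ i, 0 ≤ x i) (hy : ∀ j, 0 ≤ y j) :
    ‖G.mix x y‖ ≤ (∑ i, x i) * (∑ j, y j) := by
  rw [Finset.sum_mul_sum]
  unfold mix
  refine (norm_sum_le _ _).trans (Finset.sum_le_sum fun i _ => ?_)
  refine (norm_sum_le _ _).trans (Finset.sum_le_sum fun j _ => ?_)
  rw [norm_smul, Real.norm_eq_abs, abs_of_nonneg (mul_nonneg (hx i) (hy j))]
  exact mul_le_of_le_one_right (mul_nonneg (hx i) (hy j)) (hg i j)

lemma norm_gstar_le (hg : ∀ i j, ‖G.g i j‖ ≤ 1) (x : I → ℝ) (y : J → ℝ)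
    (hx : ∀ i, 0 ≤ x i) (hy : ∀ j, 0 ≤ y j) :
    ‖G.gstar x y‖ ≤ G.pstar x y := by
  unfold gstar pstar
  refine (norm_sum_le _ _).trans (Finset.sum_le_sum fun i _ => ?_)
  refine (norm_sum_le _ _).trans (Finset.sum_le_sum fun j _ => ?_)
  split
  · rw [norm_smul, Real.norm_eq_abs, abs_of_nonneg (mul_nonneg (hx i) (hy j))]
    exact mul_le_of_le_one_right (mul_nonneg (hx i) (hy j)) (hg i j)
  · simp

lemma norm_mix_sub_gstar (hg : ∀ i j, ‖G.g i j‖ ≤ 1) (x : I → ℝ) (y : J → ℝ)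
    (hx : ∀ i, 0 ≤ x i) (hy : ∀ j, 0 ≤ y j) :
    ‖G.mix x y - G.gstar x y‖ ≤ (∑ i, x i) * (∑ j, y j) := by
  have hrepr : G.mix x y - G.gstar x y
      = ∑ i, ∑ j, if G.Istar i || G.Jstar j then 0 else (x i * y j) • G.g i j := by
    unfold mix gstar
    rw [← Finset.sum_sub_distrib]
    refine Finset.sum_congr rfl fun i _ => ?_
    rw [← Finset.sum_sub_distrib]
    refine Finset.sum_congr rfl fun j _ => ?_
    split <;> simp
  rw [hrepr, Finset.sum_mul_sum]
  refine (norm_sum_le _ _).trans (Finset.sum_le_sum fun i _ => ?_)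
  refine (norm_sum_le _ _).trans (Finset.sum_le_sum fun j _ => ?_)
  split
  · simpa using mul_nonneg (hx i) (hy j)
  · rw [norm_smul, Real.norm_eq_abs, abs_of_nonneg (mul_nonneg (hx i) (hy j))]
    exact mul_le_of_le_one_right (mul_nonneg (hx i) (hy j)) (hg i j)

def harmonicSum (n : ℕ) : ℝ := ∑ k ∈ Finset.range n, ((k:ℝ)+1)⁻¹

lemma harmonicSum_succ (n : ℕ) : harmonicSum (n+1) = harmonicSum n + ((n:ℝ)+1)⁻¹ :=
  Finset.sum_range_succ _ n

lemma harmonicSum_nonneg (n : ℕ) : 0 ≤ harmonicSum n :=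
  Finset.sum_nonneg fun k _ => by positivity

lemma harmonicSum_le_sqrt (n : ℕ) : harmonicSum n ≤ 2 * Real.sqrt n := by
  induction n with
  | zero => simp [harmonicSum]
  | succ n ih =>
    rw [harmonicSum_succ]
    set a := Real.sqrt n with ha_def
    set b := Real.sqrt (n+1) with hb_def
    have ha0 : 0 ≤ a := Real.sqrt_nonneg _
    have hb1 : 1 ≤ b := by
      have := Real.sqrt_le_sqrt (show (1:ℝ) ≤ (n:ℝ)+1 by
        have : (0:ℝ) ≤ (n:ℝ) := Nat.cast_nonneg n; linarith)
      rwa [Real.sqrt_one] at this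
    have ha2 : a^2 = (n:ℝ) := Real.sq_sqrt (Nat.cast_nonneg n)
    have hb2 : b^2 = (n:ℝ)+1 := Real.sq_sqrt (by positivity)
    have hab : a ≤ b := Real.sqrt_le_sqrt (by linarith)
    have hbpos : (0:ℝ) < b := lt_of_lt_of_le one_pos hb1
    have key : ((n:ℝ)+1)⁻¹ ≤ 2*(b-a) := by
      rw [← one_div, div_le_iff₀ (by positivity)]
      nlinarith [sq_nonneg (a-b), sq_nonneg (a+b)]
    have hcast : ((n+1 : ℕ):ℝ) = (n:ℝ)+1 := by push_cast; ring
    rw [hcast]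
    linarith

def zrayC (β : J → ℝ) (k : ℕ) : ℝ := 1 + (∑ j, β j) * ((k:ℝ)+1)⁻¹

def zray (y β : J → ℝ) (k : ℕ) : J → ℝ :=
  fun j => (zrayC β k)⁻¹ * (y j + ((k:ℝ)+1)⁻¹ * β j)

lemma zrayC_pos (β : J → ℝ) (hβ : ∀ j, 0 ≤ β j) (k : ℕ) : 0 < zrayC β k := by
  have hs : 0 ≤ ∑ j, β j := Finset.sum_nonneg fun j _ => hβ j
  have h2 : 0 ≤ (∑ j, β j) * ((k:ℝ)+1)⁻¹ := mul_nonneg hs (by positivity)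
  unfold zrayC; linarith

lemma zray_mem (y β : J → ℝ) (hy : y ∈ stdSimplex ℝ J) (hβ : ∀ j, 0 ≤ β j) (k : ℕ) :
    zray y β k ∈ stdSimplex ℝ J := by
  have hc := zrayC_pos β hβ k
  constructor
  · intro j
    exact mul_nonneg (inv_nonneg.2 hc.le)
      (add_nonneg (hy.1 j) (mul_nonneg (by positivity) (hβ j)))
  · show (∑ j, zray y β k j) = 1
    unfold zray
    rw [← Finset.mul_sum, Finset.sum_add_distrib, hy.2, ← Finset.mul_sum]
    rw [show (1 + ((k:ℝ)+1)⁻¹ * ∑ j, β j) = zrayC β k from by unfold zrayC; ring]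
    exact inv_mul_cancel₀ hc.ne'

/-- The excluding strategy of player 2 for horizon `T`. -/
def exTau (y β : J → ℝ) (hy : y ∈ stdSimplex ℝ J) (hβ : ∀ j, 0 ≤ β j) (T : ℕ) :
    Strat2 I J :=
  fun h => ⟨zray y β (T - h.length - 1), zray_mem y β hy hβ _⟩

end GQGame


namespace GQGame
variable {I J : Type} {d : ℕ} [Fintype I] [Fintype J]
variable (G : GQGame I J d)

lemma expTotal_zero_eq (σ : Strat1 I J) (τ : Strat2 I J) (h : List (I × J)) :
    G.expTotal σ τ 0 h = 0 := rfl

lemma expTotal_succ_eq (σ : Strat1 I J) (τ : Strat2 I J) (n : ℕ) (h : List (I × J)) :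
    G.expTotal σ τ (n+1) h
      = (n:ℝ) • G.gstar (σ h) (τ h) + G.mix (σ h) (τ h)
        + ∑ p : I × J, (if G.Istar p.1 || G.Jstar p.2 then 0
            else ((σ h : I → ℝ) p.1 * ((τ h : J → ℝ) p.2))) • G.expTotal σ τ n (h ++ [p]) := by
  have hterm : ∀ (i : I) (j : J),
      (((σ h : I → ℝ) i) * ((τ h : J → ℝ) j)) •
          (if G.Istar i || G.Jstar j then ((n:ℝ)+1) • G.g i j
           else G.g i j + G.expTotal σ τ n (h ++ [(i,j)]))
        = ((n:ℝ) • (if G.Istar i || G.Jstar j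
              then (((σ h : I → ℝ) i) * ((τ h : J → ℝ) j)) • G.g i j else 0)
            + (((σ h : I → ℝ) i) * ((τ h : J → ℝ) j)) • G.g i j)
          + (if G.Istar i || G.Jstar j then 0 else (((σ h : I → ℝ) i) * ((τ h : J → ℝ) j))) •
              G.expTotal σ τ n (h ++ [(i,j)]) := by
    intro i j
    split
    · rw [zero_smul, add_zero, smul_smul, smul_smul, ← add_smul]
      congr 1; ring
    · rw [smul_zero, zero_add, smul_add]
  have h0 : G.expTotal σ τ (n+1) h
      = ∑ i, ∑ j, (((σ h : I → ℝ) i) * ((τ h : J → ℝ) j)) •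
          (if G.Istar i || G.Jstar j then ((n:ℝ)+1) • G.g i j
           else G.g i j + G.expTotal σ τ n (h ++ [(i,j)])) := rfl
  rw [h0]
  rw [Finset.sum_congr rfl fun i _ => Finset.sum_congr rfl fun j _ => hterm i j]
  simp only [Finset.sum_add_distrib]
  congr 1
  · congr 1
    · unfold gstar
      rw [Finset.smul_sum]
      exact Finset.sum_congr rfl fun i _ => (Finset.smul_sum).symm
  · rw [Fintype.sum_prod_type]

set_option maxHeartbeats 2000000 in
lemma exclude_key (hg : ∀ i j, ‖G.g i j‖ ≤ 1)
    (y β : J → ℝ) (hy : y ∈ stdSimplex ℝ J) (hβ : ∀ j, 0 ≤ β j) (T : ℕ) (σ : Strat1 I J) :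
    ∀ n : ℕ, n ≤ T → ∀ h : List (I × J), h.length = T - n →
      ∃ R A : I → ℝ, (∀ i, 0 ≤ R i) ∧ (∀ i, 0 ≤ A i) ∧
        (1 ≤ n → (1 + ∑ j, β j)⁻¹ ≤ ∑ i, R i) ∧
        ‖G.expTotal σ (exTau y β hy hβ T) n h - (G.mix R y + G.gstar A y + G.gstar R β)‖
            ≤ (∑ j, β j) * harmonicSum n ∧
        |(n:ℝ) - ((∑ i, R i) + G.pstar A y + G.pstar R β)| ≤ 2 * (∑ j, β j) * harmonicSum n := by
  intro n
  induction n with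
  | zero =>
    intro _ h _
    refine ⟨fun _ => 0, fun _ => 0, fun i => le_refl 0, fun i => le_refl 0,
      fun h1 => absurd h1 (by norm_num), ?_, ?_⟩
    · rw [expTotal_zero_eq, mix_zero_left, gstar_zero_left, gstar_zero_left]
      simp [harmonicSum]
    · rw [pstar_zero_left, pstar_zero_left]
      simp [harmonicSum]
  | succ n ih =>
    intro hn h hh
    set τ : Strat2 I J := exTau y β hy hβ T with hτ_def
    have hn' : n ≤ T := Nat.le_of_succ_le hn
    set s : ℝ := ∑ j, β j with hs_def
    have hs : 0 ≤ s := Finset.sum_nonneg fun j _ => hβ j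
    have hm : (0:ℝ) < (n:ℝ)+1 := by positivity
    set c : ℝ := zrayC β n with hc_def
    have hc_eq : c = 1 + s * ((n:ℝ)+1)⁻¹ := by rw [hc_def, hs_def]; rfl
    have hc1 : 1 ≤ c := by
      rw [hc_eq]
      have h2 : 0 ≤ s * ((n:ℝ)+1)⁻¹ := mul_nonneg hs (by positivity)
      linarith
    have hc0 : (0:ℝ) < c := lt_of_lt_of_le one_pos hc1
    have hcinv1 : c⁻¹ ≤ 1 := by
      rw [← inv_one]
      exact inv_anti₀ one_pos hc1
    set z : J → ℝ := zray y β n with hz_def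
    have hzd : ∀ j, z j = c⁻¹ * (y j + ((n:ℝ)+1)⁻¹ * β j) := fun j => by
      rw [hz_def, hc_def]; rfl
    have hz0 : ∀ j, 0 ≤ z j := by rw [hz_def]; exact (zray_mem y β hy hβ n).1
    have hz1 : ∑ j, z j = 1 := by rw [hz_def]; exact (zray_mem y β hy hβ n).2
    have hτh : ((τ h : J → ℝ)) = z := by
      rw [hτ_def, hz_def]
      have hlen : T - h.length - 1 = n := by omega
      show zray y β (T - h.length - 1) = zray y β n
      rw [hlen]
    set x : I → ℝ := ((σ h : I → ℝ)) with hx_def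
    have hxmem : x ∈ stdSimplex ℝ I := by rw [hx_def]; exact (σ h).2
    obtain ⟨hx0, hx1⟩ := hxmem
    have hIH := fun p : I × J => ih hn' (h ++ [p]) (by
      simp only [List.length_append, List.length_singleton, hh]
      omega)
    choose R A hR0 hA0 hRlow hRnorm hRden using hIH
    set w : I × J → ℝ := fun p => if G.Istar p.1 || G.Jstar p.2 then 0 else x p.1 * z p.2
      with hw_def
    have hw0 : ∀ p, 0 ≤ w p := by
      intro p; rw [hw_def]; dsimp only; split
      · exact le_refl 0
      · exact mul_nonneg (hx0 _) (hz0 _)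
    have hwsum : ∑ p : I × J, w p = 1 - G.pstar x z := by
      have h1 : ∀ p : I × J, w p
          = x p.1 * z p.2 - (if G.Istar p.1 || G.Jstar p.2 then x p.1 * z p.2 else 0) := by
        intro p; rw [hw_def]; dsimp only; split <;> simp
      rw [Finset.sum_congr rfl fun p _ => h1 p, Finset.sum_sub_distrib]
      have h2 : ∑ p : I × J, x p.1 * z p.2 = 1 := by
        rw [Fintype.sum_prod_type]
        calc ∑ i, ∑ j, x i * z j = ∑ i, x i * ∑ j, z j :=
              Finset.sum_congr rfl fun i _ => (Finset.mul_sum _ _ _).symm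
          _ = 1 := by rw [hz1]; simpa using hx1
      have h3 : ∑ p : I × J, (if G.Istar p.1 || G.Jstar p.2 then x p.1 * z p.2 else 0)
          = G.pstar x z := by
        unfold pstar; rw [Fintype.sum_prod_type]
      rw [h2, h3]
    have hpz0 : 0 ≤ G.pstar x z := G.pstar_nonneg x z hx0 hz0
    have hwsum_le : ∑ p : I × J, w p ≤ 1 := by rw [hwsum]; linarith
    set R' : I → ℝ := fun i' => c⁻¹ * x i' + ∑ p : I × J, w p * R p i' with hR'_def
    set A' : I → ℝ := fun i' => (c⁻¹ * (n:ℝ)) * x i' + ∑ p : I × J, w p * A p i' with hA'_def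
    have hr' : ∑ i', R' i' = c⁻¹ + ∑ p : I × J, w p * (∑ i', R p i') := by
      rw [hR'_def]
      dsimp only
      rw [Finset.sum_add_distrib, ← Finset.mul_sum, hx1, mul_one, Finset.sum_comm]
      congr 1
      exact Finset.sum_congr rfl fun p _ => (Finset.mul_sum _ _ _).symm
    have hmixR' : G.mix R' y = c⁻¹ • G.mix x y + ∑ p : I × J, w p • G.mix (R p) y := by
      rw [hR'_def]; exact G.mix_comb c⁻¹ x w R y
    have hgA' : G.gstar A' y
        = (c⁻¹ * (n:ℝ)) • G.gstar x y + ∑ p : I × J, w p • G.gstar (A p) y := by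
      rw [hA'_def]; exact G.gstar_comb _ x w A y
    have hgR'β : G.gstar R' β = c⁻¹ • G.gstar x β + ∑ p : I × J, w p • G.gstar (R p) β := by
      rw [hR'_def]; exact G.gstar_comb _ x w R β
    have hpA' : G.pstar A' y
        = (c⁻¹ * (n:ℝ)) * G.pstar x y + ∑ p : I × J, w p * G.pstar (A p) y := by
      rw [hA'_def]; exact G.pstar_comb _ x w A y
    have hpR'β : G.pstar R' β = c⁻¹ * G.pstar x β + ∑ p : I × J, w p * G.pstar (R p) β := by
      rw [hR'_def]; exact G.pstar_comb _ x w R β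
    have hmixz : G.mix x z = c⁻¹ • G.mix x y + (c⁻¹ * ((n:ℝ)+1)⁻¹) • G.mix x β :=
      G.mix_right_decomp x y β z c ((n:ℝ)+1) hzd
    have hgz : G.gstar x z = c⁻¹ • G.gstar x y + (c⁻¹ * ((n:ℝ)+1)⁻¹) • G.gstar x β :=
      G.gstar_right_decomp x y β z c ((n:ℝ)+1) hzd
    have hpz : G.pstar x z = c⁻¹ * G.pstar x y + (c⁻¹ * ((n:ℝ)+1)⁻¹) * G.pstar x β :=
      G.pstar_right_decomp x y β z c ((n:ℝ)+1) hzd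
    have hkey : G.expTotal σ τ (n+1) h - (G.mix R' y + G.gstar A' y + G.gstar R' β)
        = (c⁻¹ * ((n:ℝ)+1)⁻¹) • (G.mix x β - G.gstar x β)
          + ∑ p : I × J, w p •
              (G.expTotal σ τ n (h ++ [p])
                - (G.mix (R p) y + G.gstar (A p) y + G.gstar (R p) β)) := by
      rw [G.expTotal_succ_eq σ τ n h, hτh, ← hx_def]
      have hwp : ∀ p : I × J,
          (if G.Istar p.1 || G.Jstar p.2 then (0:ℝ) else x p.1 * z p.2) = w p := by
        intro p; rw [hw_def]
      simp only [hwp]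
      rw [hmixR', hgA', hgR'β, hmixz, hgz]
      simp only [smul_sub, smul_add, Finset.sum_sub_distrib, Finset.sum_add_distrib]
      match_scalars <;> field_simp [hc0.ne', hm.ne'] <;> ring
    refine ⟨R', A', ?_, ?_, ?_, ?_, ?_⟩
    · intro i'
      rw [hR'_def]; dsimp only
      exact add_nonneg (mul_nonneg (inv_nonneg.2 hc0.le) (hx0 i'))
        (Finset.sum_nonneg fun p _ => mul_nonneg (hw0 p) (hR0 p i'))
    · intro i'
      rw [hA'_def]; dsimp only
      exact add_nonneg
        (mul_nonneg (mul_nonneg (inv_nonneg.2 hc0.le) (Nat.cast_nonneg n)) (hx0 i'))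
        (Finset.sum_nonneg fun p _ => mul_nonneg (hw0 p) (hA0 p i'))
    · intro _
      rw [hr']
      have h1 : c ≤ 1 + s := by
        rw [hc_eq]
        have h2 : ((n:ℝ)+1)⁻¹ ≤ 1 := by
          rw [← inv_one]
          refine inv_anti₀ one_pos ?_
          have := Nat.cast_nonneg (α := ℝ) n
          linarith
        nlinarith
      have h2 : (1+s)⁻¹ ≤ c⁻¹ := inv_anti₀ hc0 h1
      have h3 : 0 ≤ ∑ p : I×J, w p * (∑ i', R p i') :=
        Finset.sum_nonneg fun p _ =>
          mul_nonneg (hw0 p) (Finset.sum_nonneg fun i _ => hR0 p i)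
      linarith
    · rw [hkey]
      refine (norm_add_le _ _).trans ?_
      have e1 : ‖(c⁻¹ * ((n:ℝ)+1)⁻¹) • (G.mix x β - G.gstar x β)‖ ≤ ((n:ℝ)+1)⁻¹ * s := by
        rw [norm_smul, Real.norm_eq_abs, abs_of_nonneg (by positivity)]
        have hbound := G.norm_mix_sub_gstar hg x β hx0 hβ
        rw [hx1, one_mul, ← hs_def] at hbound
        have h4 : c⁻¹ * ((n:ℝ)+1)⁻¹ ≤ ((n:ℝ)+1)⁻¹ :=
          mul_le_of_le_one_left (by positivity) hcinv1
        have h5 : (0:ℝ) ≤ ((n:ℝ)+1)⁻¹ := by positivity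
        nlinarith [norm_nonneg (G.mix x β - G.gstar x β)]
      have e2 : ‖∑ p : I × J, w p •
            (G.expTotal σ τ n (h ++ [p])
              - (G.mix (R p) y + G.gstar (A p) y + G.gstar (R p) β))‖
          ≤ s * harmonicSum n := by
        refine (norm_sum_le _ _).trans ?_
        have hterm : ∀ p : I × J, ‖w p • (G.expTotal σ τ n (h ++ [p])
              - (G.mix (R p) y + G.gstar (A p) y + G.gstar (R p) β))‖
            ≤ w p * (s * harmonicSum n) := by
          intro p
          rw [norm_smul, Real.norm_eq_abs, abs_of_nonneg (hw0 p)]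
          exact mul_le_mul_of_nonneg_left (hRnorm p) (hw0 p)
        refine (Finset.sum_le_sum fun p _ => hterm p).trans ?_
        rw [← Finset.sum_mul]
        exact mul_le_of_le_one_left (mul_nonneg hs (harmonicSum_nonneg n)) hwsum_le
      rw [harmonicSum_succ, mul_add]
      have : ((n:ℝ)+1)⁻¹ * s = s * ((n:ℝ)+1)⁻¹ := mul_comm _ _
      linarith
    · have hden_eq : ((n:ℝ)+1) - ((∑ i', R' i') + G.pstar A' y + G.pstar R' β)
          = ((1 - c⁻¹) - (c⁻¹ * ((n:ℝ)+1)⁻¹) * G.pstar x β)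
            + ∑ p : I × J, w p *
                ((n:ℝ) - ((∑ i', R p i') + G.pstar (A p) y + G.pstar (R p) β)) := by
        have hexp : ∑ p : I × J, w p *
              ((n:ℝ) - ((∑ i', R p i') + G.pstar (A p) y + G.pstar (R p) β))
            = (∑ p : I × J, w p) * (n:ℝ)
              - ((∑ p : I × J, w p * (∑ i', R p i')) + (∑ p : I × J, w p * G.pstar (A p) y)
                 + (∑ p : I × J, w p * G.pstar (R p) β)) := by
          simp only [mul_sub, mul_add, Finset.sum_sub_distrib, Finset.sum_add_distrib,
            Finset.sum_mul]
        rw [hexp, hr', hpA', hpR'β, hwsum, hpz]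
        field_simp [hc0.ne', hm.ne']
        ring
      push_cast
      rw [hden_eq]
      have b2 : 1 - c⁻¹ ≤ s * ((n:ℝ)+1)⁻¹ := by
        rw [hc_eq]
        set u : ℝ := s * ((n:ℝ)+1)⁻¹ with hu_def
        have hu : 0 ≤ u := mul_nonneg hs (by positivity)
        have h1u : (0:ℝ) < 1 + u := by linarith
        nlinarith [mul_inv_cancel₀ h1u.ne', inv_nonneg.2 h1u.le, sq_nonneg u]
      have b1 : 0 ≤ 1 - c⁻¹ := by linarith
      have b3 : G.pstar x β ≤ s := by
        have h5 := G.pstar_le_sums x β hx0 hβ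
        rw [hx1, one_mul, ← hs_def] at h5
        exact h5
      have b3' : 0 ≤ G.pstar x β := G.pstar_nonneg x β hx0 hβ
      have b6 : c⁻¹ * ((n:ℝ)+1)⁻¹ * G.pstar x β ≤ ((n:ℝ)+1)⁻¹ * s := by
        have h4 : c⁻¹ * ((n:ℝ)+1)⁻¹ ≤ ((n:ℝ)+1)⁻¹ :=
          mul_le_of_le_one_left (by positivity) hcinv1
        have h5 : (0:ℝ) ≤ ((n:ℝ)+1)⁻¹ := by positivity
        nlinarith
      have b6' : 0 ≤ c⁻¹ * ((n:ℝ)+1)⁻¹ * G.pstar x β := by positivity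
      have b4 : |∑ p : I × J, w p *
            ((n:ℝ) - ((∑ i', R p i') + G.pstar (A p) y + G.pstar (R p) β))|
          ≤ 2 * s * harmonicSum n := by
        refine (Finset.abs_sum_le_sum_abs _ _).trans ?_
        have hterm : ∀ p : I × J, |w p *
              ((n:ℝ) - ((∑ i', R p i') + G.pstar (A p) y + G.pstar (R p) β))|
            ≤ w p * (2 * s * harmonicSum n) := by
          intro p
          rw [abs_mul, abs_of_nonneg (hw0 p)]
          exact mul_le_mul_of_nonneg_left (hRden p) (hw0 p)
        refine (Finset.sum_le_sum fun p _ => hterm p).trans ?_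
        rw [← Finset.sum_mul]
        refine mul_le_of_le_one_left ?_ hwsum_le
        have := harmonicSum_nonneg n
        positivity
      refine (abs_add_le _ _).trans ?_
      rw [harmonicSum_succ]
      have habs1 : |(1 - c⁻¹) - (c⁻¹ * ((n:ℝ)+1)⁻¹) * G.pstar x β|
          ≤ 2 * (s * ((n:ℝ)+1)⁻¹) := by
        rw [abs_le]
        constructor <;> nlinarith
      nlinarith [harmonicSum_nonneg n]


set_option maxHeartbeats 1000000 in
lemma cond3_extract (C : Set (EuclideanSpace ℝ (Fin d))) (hpos : 0 < cond3Val G C) :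
    ∃ (y β : J → ℝ), y ∈ stdSimplex ℝ J ∧ (∀ j, 0 ≤ β j) ∧
      ∀ (x : I → ℝ), x ∈ stdSimplex ℝ I → ∀ (α : I → ℝ), (∀ i, 0 ≤ α i) →
        cond3Val G C / 2 ≤ Metric.infDist (G.phi x α y β) C := by
  by_contra hcon
  push_neg at hcon
  have hub : cond3Val G C ≤ cond3Val G C / 2 := by
    have hnn : (0:ℝ) ≤ cond3Val G C / 2 := by linarith
    conv_lhs => rw [cond3Val]
    refine Real.iSup_le (fun y => Real.iSup_le (fun β => ?_) hnn) hnn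
    obtain ⟨x, hx, α, hα, hlt⟩ := hcon y.1 β.1 y.2 β.2
    have hbb : BddBelow (Set.range fun α' : {a : I → ℝ // ∀ i, 0 ≤ a i} =>
        Metric.infDist (G.phi x α'.1 y.1 β.1) C) := by
      refine ⟨0, ?_⟩
      rintro r ⟨α', rfl⟩
      exact Metric.infDist_nonneg
    have hbb2 : BddBelow (Set.range fun x' : (stdSimplex ℝ I) =>
        ⨅ α' : {a : I → ℝ // ∀ i, 0 ≤ a i}, Metric.infDist (G.phi x'.1 α'.1 y.1 β.1) C) := by
      refine ⟨0, ?_⟩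
      rintro r ⟨x', rfl⟩
      exact Real.iInf_nonneg fun α' => Metric.infDist_nonneg
    calc (⨅ x' : (stdSimplex ℝ I), ⨅ α' : {a : I → ℝ // ∀ i, 0 ≤ a i},
            Metric.infDist (G.phi x'.1 α'.1 y.1 β.1) C)
        ≤ ⨅ α' : {a : I → ℝ // ∀ i, 0 ≤ a i},
            Metric.infDist (G.phi x α'.1 y.1 β.1) C := ciInf_le hbb2 ⟨x, hx⟩
      _ ≤ Metric.infDist (G.phi x α y.1 β.1) C := ciInf_le hbb ⟨α, hα⟩
      _ ≤ cond3Val G C / 2 := hlt.le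
  linarith

set_option maxHeartbeats 1000000 in
lemma exclude_core (hg : ∀ i j, ‖G.g i j‖ ≤ 1) (C : Set (EuclideanSpace ℝ (Fin d)))
    (hpos : 0 < cond3Val G C) :
    ∃ δ > (0:ℝ), ∃ T₀ : ℕ, ∀ T ≥ T₀, ∃ τ : Strat2 I J, ∀ σ : Strat1 I J,
      δ ≤ Metric.infDist (G.avg σ τ T) C := by
  obtain ⟨y, β, hy, hβ, hmain⟩ := G.cond3_extract C hpos
  set η : ℝ := cond3Val G C / 2 with hη_def
  have hη : 0 < η := by rw [hη_def]; linarith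
  set s : ℝ := ∑ j, β j with hs_def
  have hs : 0 ≤ s := Finset.sum_nonneg fun j _ => hβ j
  refine ⟨η/2, by linarith, max 1 ⌈144 * s^2 / η^2⌉₊, fun T hT => ?_⟩
  have hT1 : 1 ≤ T := le_trans (le_max_left _ _) hT
  have hTpos : (0:ℝ) < (T:ℝ) := by exact_mod_cast hT1
  have hTs : 144 * s^2 ≤ (T:ℝ) * η^2 := by
    have h1 : (144 * s^2 / η^2 : ℝ) ≤ (⌈144 * s^2 / η^2⌉₊ : ℝ) := Nat.le_ceil _
    have h2 : ((⌈144 * s^2 / η^2⌉₊ : ℕ) : ℝ) ≤ (T:ℝ) := by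
      exact_mod_cast le_trans (le_max_right _ _) hT
    have h3 : 144 * s^2 / η^2 ≤ (T:ℝ) := le_trans h1 h2
    calc 144 * s^2 = (144 * s^2 / η^2) * η^2 := by field_simp
      _ ≤ (T:ℝ) * η^2 := mul_le_mul_of_nonneg_right h3 (sq_nonneg η)
  refine ⟨exTau y β hy hβ T, fun σ => ?_⟩
  set τ : Strat2 I J := exTau y β hy hβ T with hτ_def
  obtain ⟨R, A, hR0, hA0, hRlow, hRnorm, hRden⟩ :=
    G.exclude_key hg y β hy hβ T σ T le_rfl [] (by simp)
  rw [← hτ_def] at hRnorm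
  rw [← hs_def] at hRnorm hRden hRlow
  set r : ℝ := ∑ i, R i with hr_def
  have hr : (1+s)⁻¹ ≤ r := hRlow hT1
  have hrpos : 0 < r := lt_of_lt_of_le (by positivity) hr
  have hpA : 0 ≤ G.pstar A y := G.pstar_nonneg A y hA0 hy.1
  have hpR : 0 ≤ G.pstar R β := G.pstar_nonneg R β hR0 hβ
  set Den : ℝ := r + G.pstar A y + G.pstar R β with hDen_def
  have hDenpos : 0 < Den := by rw [hDen_def]; linarith
  set Num : EuclideanSpace ℝ (Fin d) := G.mix R y + G.gstar A y + G.gstar R β with hNum_def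
  have hNumle : ‖Num‖ ≤ Den := by
    rw [hNum_def, hDen_def]
    have h1 : ‖G.mix R y‖ ≤ r := by
      have := G.norm_mix_le hg R y hR0 hy.1
      rwa [hy.2, mul_one, ← hr_def] at this
    have h2 := G.norm_gstar_le hg A y hA0 hy.1
    have h3 := G.norm_gstar_le hg R β hR0 hβ
    calc ‖G.mix R y + G.gstar A y + G.gstar R β‖
        ≤ ‖G.mix R y + G.gstar A y‖ + ‖G.gstar R β‖ := norm_add_le _ _
      _ ≤ ‖G.mix R y‖ + ‖G.gstar A y‖ + ‖G.gstar R β‖ := by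
          have := norm_add_le (G.mix R y) (G.gstar A y); linarith
      _ ≤ r + G.pstar A y + G.pstar R β := by linarith
  have hphi : G.phi (r⁻¹ • R) (r⁻¹ • A) y β = Den⁻¹ • Num := by
    rw [phi, G.pstar_smul_left, G.pstar_smul_left, G.mix_smul_left, G.gstar_smul_left,
      G.gstar_smul_left]
    have hden2 : 1 + r⁻¹ * G.pstar A y + r⁻¹ * G.pstar R β = r⁻¹ * Den := by
      rw [hDen_def]
      field_simp
    rw [hden2, hNum_def]
    rw [← smul_add, ← smul_add, smul_smul]
    congr 1
    rw [mul_inv, inv_inv]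
    field_simp
  have hmem : (r⁻¹ • R) ∈ stdSimplex ℝ I := by
    constructor
    · intro i
      exact mul_nonneg (inv_nonneg.2 hrpos.le) (hR0 i)
    · show (∑ i, r⁻¹ * R i) = 1
      rw [← Finset.mul_sum, ← hr_def]
      exact inv_mul_cancel₀ hrpos.ne'
  have hα0 : ∀ i, 0 ≤ (r⁻¹ • A) i := fun i => mul_nonneg (inv_nonneg.2 hrpos.le) (hA0 i)
  have hηφ : η ≤ Metric.infDist (Den⁻¹ • Num) C := by
    rw [← hphi]
    exact hmain (r⁻¹ • R) hmem (r⁻¹ • A) hα0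
  -- distance between the average and the φ-point
  have hdist : dist (G.avg σ τ T) (Den⁻¹ • Num) ≤ 3 * s * harmonicSum T / T := by
    have hid : G.avg σ τ T - Den⁻¹ • Num
        = (T:ℝ)⁻¹ • (G.expTotal σ τ T [] - Num) + ((T:ℝ)⁻¹ - Den⁻¹) • Num := by
      rw [avg]
      module
    rw [dist_eq_norm, hid]
    have hb1 : ‖(T:ℝ)⁻¹ • (G.expTotal σ τ T [] - Num)‖ ≤ (T:ℝ)⁻¹ * (s * harmonicSum T) := by
      rw [norm_smul, Real.norm_eq_abs, abs_of_nonneg (by positivity)]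
      exact mul_le_mul_of_nonneg_left hRnorm (by positivity)
    have hb2 : ‖((T:ℝ)⁻¹ - Den⁻¹) • Num‖ ≤ 2 * s * harmonicSum T / T := by
      rw [norm_smul, Real.norm_eq_abs]
      have habs : |(T:ℝ)⁻¹ - Den⁻¹| = |Den - (T:ℝ)| / ((T:ℝ) * Den) := by
        have hrw : (T:ℝ)⁻¹ - Den⁻¹ = (Den - (T:ℝ)) / ((T:ℝ) * Den) := by
          field_simp
        rw [hrw, abs_div, abs_of_pos (show (0:ℝ) < (T:ℝ) * Den by positivity)]
      rw [habs]
      have h6 : |Den - (T:ℝ)| ≤ 2 * s * harmonicSum T := by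
        rw [abs_sub_comm]
        exact hRden
      calc |Den - (T:ℝ)| / ((T:ℝ) * Den) * ‖Num‖
          ≤ |Den - (T:ℝ)| / ((T:ℝ) * Den) * Den := by
            exact mul_le_mul_of_nonneg_left hNumle (by positivity)
        _ = |Den - (T:ℝ)| / (T:ℝ) := by field_simp
        _ ≤ 2 * s * harmonicSum T / (T:ℝ) := by gcongr
    refine (norm_add_le _ _).trans ?_
    have heq : (T:ℝ)⁻¹ * (s * harmonicSum T) + 2 * s * harmonicSum T / T
        = 3 * s * harmonicSum T / T := by field_simp; ring
    linarith
  have hsmall : 3 * s * harmonicSum T / T ≤ η / 2 := by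
    set u : ℝ := Real.sqrt T with hu_def
    have hu2 : u^2 = (T:ℝ) := Real.sq_sqrt hTpos.le
    have hu1 : 1 ≤ u := by
      have := Real.sqrt_le_sqrt (show (1:ℝ) ≤ (T:ℝ) by exact_mod_cast hT1)
      rwa [Real.sqrt_one] at this
    have hH : harmonicSum T ≤ 2 * u := harmonicSum_le_sqrt T
    have h12 : 12 * s ≤ η * u := by
      nlinarith [sq_nonneg (η * u - 12 * s), sq_nonneg (η * u + 12 * s), hTs, hu2,
        mul_pos hη (lt_of_lt_of_le one_pos hu1), hs, hη.le]
    rw [div_le_iff₀ hTpos]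
    have hHnn := harmonicSum_nonneg T
    nlinarith
  have htri := Metric.infDist_le_infDist_add_dist (x := Den⁻¹ • Num) (y := G.avg σ τ T) (s := C)
  have hdc : dist (Den⁻¹ • Num) (G.avg σ τ T) = dist (G.avg σ τ T) (Den⁻¹ • Num) :=
    dist_comm _ _
  linarith


end GQGame

open GQGame in
/-- if a closed convex set does not satisfy Condition (3) (the quantity in
Condition (3) is strictly positive), then it is weakly excludable by player 2;
consequently, if it is weakly approachable by player 1 then Condition (3) holds. -/
theorem weaklyExcludable_of_not_cond3 {I J : Type} {d : ℕ}
    [Fintype I] [Fintype J] [Nonempty I] [Nonempty J]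
    (G : GQGame I J d) (hg : ∀ i j, ‖G.g i j‖ ≤ 1)
    (C : Set (EuclideanSpace ℝ (Fin d))) (hC : IsClosed C) (hCconv : Convex ℝ C) :
    (0 < cond3Val G C → G.WeaklyExcludable2 C) ∧
    (G.WeaklyApproachable1 C → cond3Val G C = 0) := by
  have hcore : 0 < cond3Val G C → ∃ δ > (0:ℝ), ∃ T₀ : ℕ, ∀ T ≥ T₀, ∃ τ : Strat2 I J,
      ∀ σ : Strat1 I J, δ ≤ Metric.infDist (G.avg σ τ T) C :=
    fun hpos => G.exclude_core hg C hpos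
  constructor
  · intro hpos
    obtain ⟨δ, hδ, T₀, hT₀⟩ := hcore hpos
    refine ⟨δ, hδ, fun ε hε => ⟨T₀, fun T hT => ?_⟩⟩
    obtain ⟨τ, hτ⟩ := hT₀ T hT
    refine ⟨τ, fun σ => ?_⟩
    have hmem : G.avg σ τ T ∈ {z | δ ≤ Metric.infDist z C} := hτ σ
    calc Metric.infDist (G.avg σ τ T) {z | δ ≤ Metric.infDist z C}
        ≤ dist (G.avg σ τ T) (G.avg σ τ T) := Metric.infDist_le_dist_of_mem hmem
      _ = 0 := dist_self _
      _ ≤ ε := hε.le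
  · intro happ
    by_contra hne
    have h0 : 0 ≤ cond3Val G C := by
      rw [cond3Val]
      exact Real.iSup_nonneg fun y => Real.iSup_nonneg fun β =>
        Real.iInf_nonneg fun x => Real.iInf_nonneg fun α => Metric.infDist_nonneg
    have hpos : 0 < cond3Val G C := lt_of_le_of_ne h0 (Ne.symm hne)
    obtain ⟨δ, hδ, T₀, hT₀⟩ := hcore hpos
    obtain ⟨T₁, hT₁⟩ := happ (δ/2) (by linarith)
    obtain ⟨σ, hσ⟩ := hT₁ (max T₀ T₁) (le_max_right _ _)
    obtain ⟨τ, hτ⟩ := hT₀ (max T₀ T₁) (le_max_left _ _)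
    have h1 := hσ τ
    have h2 := hτ σ
    linarith


end
end

section
/- In any generalized quitting game, for every fixed y₀ ∈ Δ(J) and β₀ ∈ 𝓜(J), the set E₀ = { φ(x,α,y₀,β₀) : x ∈ Δ(I), α ∈ 𝓜(I) } is a convex subset of the closed unit ball of ℝ^d. (Convexity: if z = Σ_i λ_i φ(x_i,α_i,y₀,β₀) with λ_i ≥ 0 and Σ_i λ_i = 1, then, setting θ_i = (1 + p*(α_i,y₀) + p*(x_i,β₀))^{-1}, x = (Σ_i λ_i θ_i x_i)/(Σ_i λ_i θ_i) and α = (Σ_i λ_i θ_i α_i)/(Σ_i λ_i θ_i), one has z = φ(x,α,y₀,β₀).) -/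
open scoped BigOperators

noncomputable section

section Aux

open GQGame

variable {I J : Type} {d : ℕ} [Fintype I] [Fintype J]

lemma pstar_nonneg (G : GQGame I J d) {α : I → ℝ} {β : J → ℝ}
    (hα : ∀ i, 0 ≤ α i) (hβ : ∀ j, 0 ≤ β j) : 0 ≤ G.pstar α β := by
  apply Finset.sum_nonneg; intro i _
  apply Finset.sum_nonneg; intro j _
  split
  · exact mul_nonneg (hα i) (hβ j)
  · exact le_rfl

lemma pstar_comb (G : GQGame I J d) (a b : ℝ) (x₁ x₂ : I → ℝ) (β : J → ℝ) :
    G.pstar (fun i => a * x₁ i + b * x₂ i) β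
      = a * G.pstar x₁ β + b * G.pstar x₂ β := by
  simp only [pstar, Finset.mul_sum, ← Finset.sum_add_distrib]
  refine Finset.sum_congr rfl fun i _ => Finset.sum_congr rfl fun j _ => ?_
  split <;> ring

lemma gstar_comb (G : GQGame I J d) (a b : ℝ) (x₁ x₂ : I → ℝ) (β : J → ℝ) :
    G.gstar (fun i => a * x₁ i + b * x₂ i) β
      = a • G.gstar x₁ β + b • G.gstar x₂ β := by
  simp only [gstar, Finset.smul_sum, ← Finset.sum_add_distrib]
  refine Finset.sum_congr rfl fun i _ => Finset.sum_congr rfl fun j _ => ?_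
  split
  · rw [show (a * x₁ i + b * x₂ i) * β j = a * (x₁ i * β j) + b * (x₂ i * β j) by ring,
      add_smul, smul_smul, smul_smul]
  · simp

lemma mix_comb (G : GQGame I J d) (a b : ℝ) (x₁ x₂ : I → ℝ) (y : J → ℝ) :
    G.mix (fun i => a * x₁ i + b * x₂ i) y
      = a • G.mix x₁ y + b • G.mix x₂ y := by
  simp only [mix, Finset.smul_sum, ← Finset.sum_add_distrib]
  refine Finset.sum_congr rfl fun i _ => Finset.sum_congr rfl fun j _ => ?_
  rw [show (a * x₁ i + b * x₂ i) * y j = a * (x₁ i * y j) + b * (x₂ i * y j) by ring,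
    add_smul, smul_smul, smul_smul]

lemma norm_mix_le (G : GQGame I J d) (hg : ∀ i j, ‖G.g i j‖ ≤ 1)
    {x : I → ℝ} {y : J → ℝ} (hx : ∀ i, 0 ≤ x i) (hy : ∀ j, 0 ≤ y j) :
    ‖G.mix x y‖ ≤ (∑ i, x i) * (∑ j, y j) := by
  calc ‖G.mix x y‖ ≤ ∑ i, ∑ j, x i * y j := by
        refine (norm_sum_le _ _).trans (Finset.sum_le_sum fun i _ => ?_)
        refine (norm_sum_le _ _).trans (Finset.sum_le_sum fun j _ => ?_)
        rw [norm_smul, Real.norm_eq_abs, abs_of_nonneg (mul_nonneg (hx i) (hy j))]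
        calc x i * y j * ‖G.g i j‖ ≤ x i * y j * 1 :=
              mul_le_mul_of_nonneg_left (hg i j) (mul_nonneg (hx i) (hy j))
          _ = x i * y j := mul_one _
    _ = (∑ i, x i) * (∑ j, y j) := by rw [Finset.sum_mul_sum]

lemma norm_gstar_le (G : GQGame I J d) (hg : ∀ i j, ‖G.g i j‖ ≤ 1)
    {α : I → ℝ} {β : J → ℝ} (hα : ∀ i, 0 ≤ α i) (hβ : ∀ j, 0 ≤ β j) :
    ‖G.gstar α β‖ ≤ G.pstar α β := by
  unfold gstar pstar
  refine (norm_sum_le _ _).trans (Finset.sum_le_sum fun i _ => ?_)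
  refine (norm_sum_le _ _).trans (Finset.sum_le_sum fun j _ => ?_)
  split
  · rw [norm_smul, Real.norm_eq_abs, abs_of_nonneg (mul_nonneg (hα i) (hβ j))]
    calc α i * β j * ‖G.g i j‖ ≤ α i * β j * 1 :=
          mul_le_mul_of_nonneg_left (hg i j) (mul_nonneg (hα i) (hβ j))
      _ = α i * β j := mul_one _
  · simp

end Aux

open GQGame in
/-- for fixed `y₀ ∈ Δ(J)` and `β₀ ∈ 𝓜(J)`, the set
`E₀ = {φ(x,α,y₀,β₀) : x ∈ Δ(I), α ∈ 𝓜(I)}` is a convex subset of the closed unit ball. -/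
theorem convex_phi_image {I J : Type} {d : ℕ}
    [Fintype I] [Fintype J] [Nonempty I] [Nonempty J]
    (G : GQGame I J d) (hg : ∀ i j, ‖G.g i j‖ ≤ 1)
    (y₀ : J → ℝ) (hy₀ : y₀ ∈ stdSimplex ℝ J) (β₀ : J → ℝ) (hβ₀ : ∀ j, 0 ≤ β₀ j) :
    Convex ℝ {z : EuclideanSpace ℝ (Fin d) |
        ∃ x ∈ stdSimplex ℝ I, ∃ α : I → ℝ, (∀ i, 0 ≤ α i) ∧ z = G.phi x α y₀ β₀} ∧
    {z : EuclideanSpace ℝ (Fin d) |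
        ∃ x ∈ stdSimplex ℝ I, ∃ α : I → ℝ, (∀ i, 0 ≤ α i) ∧ z = G.phi x α y₀ β₀}
      ⊆ Metric.closedBall 0 1 := by
  have hy₀n : ∀ j, 0 ≤ y₀ j := hy₀.1
  constructor
  · -- Convexity
    rintro z₁ ⟨x₁, hx₁, α₁, hα₁, rfl⟩ z₂ ⟨x₂, hx₂, α₂, hα₂, rfl⟩ a b ha hb hab
    set θ₁ : ℝ := 1 + G.pstar α₁ y₀ + G.pstar x₁ β₀ with hθ₁
    set θ₂ : ℝ := 1 + G.pstar α₂ y₀ + G.pstar x₂ β₀ with hθ₂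
    have hθ₁pos : 0 < θ₁ := by
      have := pstar_nonneg G hα₁ hy₀n
      have := pstar_nonneg G hx₁.1 hβ₀
      positivity
    have hθ₂pos : 0 < θ₂ := by
      have := pstar_nonneg G hα₂ hy₀n
      have := pstar_nonneg G hx₂.1 hβ₀
      positivity
    set s : ℝ := a * θ₁⁻¹ + b * θ₂⁻¹ with hs
    have hspos : 0 < s := by
      rw [hs]
      rcases eq_or_lt_of_le ha with h | h
      · have hb1 : b = 1 := by linarith
        simp [← h, hb1, inv_pos.2 hθ₂pos]
      · have h1 : 0 < a * θ₁⁻¹ := mul_pos h (inv_pos.2 hθ₁pos)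
        have h2 : 0 ≤ b * θ₂⁻¹ := mul_nonneg hb (inv_pos.2 hθ₂pos).le
        linarith
    set l₁ : ℝ := s⁻¹ * (a * θ₁⁻¹) with hl₁
    set l₂ : ℝ := s⁻¹ * (b * θ₂⁻¹) with hl₂
    have hl₁n : 0 ≤ l₁ := by positivity
    have hl₂n : 0 ≤ l₂ := by positivity
    have hlsum : l₁ + l₂ = 1 := by
      rw [hl₁, hl₂, ← mul_add, ← hs, inv_mul_cancel₀ hspos.ne']
    set x : I → ℝ := fun i => l₁ * x₁ i + l₂ * x₂ i with hx
    set α : I → ℝ := fun i => l₁ * α₁ i + l₂ * α₂ i with hα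
    refine ⟨x, ⟨fun i => add_nonneg (mul_nonneg hl₁n (hx₁.1 i)) (mul_nonneg hl₂n (hx₂.1 i)), ?_⟩,
      α, fun i => add_nonneg (mul_nonneg hl₁n (hα₁ i)) (mul_nonneg hl₂n (hα₂ i)), ?_⟩
    · simp only [hx, Finset.sum_add_distrib, ← Finset.mul_sum, hx₁.2, hx₂.2, mul_one]
      exact hlsum
    · -- z = φ(x, α, y₀, β₀)
      have hpα : G.pstar α y₀ = l₁ * G.pstar α₁ y₀ + l₂ * G.pstar α₂ y₀ :=
        pstar_comb G l₁ l₂ α₁ α₂ y₀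
      have hpx : G.pstar x β₀ = l₁ * G.pstar x₁ β₀ + l₂ * G.pstar x₂ β₀ :=
        pstar_comb G l₁ l₂ x₁ x₂ β₀
      have hD : 1 + G.pstar α y₀ + G.pstar x β₀ = s⁻¹ := by
        rw [hpα, hpx]
        have h1 : θ₁⁻¹ * θ₁ = 1 := inv_mul_cancel₀ hθ₁pos.ne'
        have h2 : θ₂⁻¹ * θ₂ = 1 := inv_mul_cancel₀ hθ₂pos.ne'
        have : l₁ * θ₁ + l₂ * θ₂ = s⁻¹ := by
          calc l₁ * θ₁ + l₂ * θ₂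
              = s⁻¹ * (a * (θ₁⁻¹ * θ₁)) + s⁻¹ * (b * (θ₂⁻¹ * θ₂)) := by rw [hl₁, hl₂]; ring
            _ = s⁻¹ := by rw [h1, h2, mul_one, mul_one, ← mul_add, hab, mul_one]
        rw [hθ₁, hθ₂] at this
        linarith [hlsum, this]
      have hN : G.mix x y₀ + G.gstar α y₀ + G.gstar x β₀
          = l₁ • (G.mix x₁ y₀ + G.gstar α₁ y₀ + G.gstar x₁ β₀)
            + l₂ • (G.mix x₂ y₀ + G.gstar α₂ y₀ + G.gstar x₂ β₀) := by
        rw [mix_comb G l₁ l₂ x₁ x₂ y₀, gstar_comb G l₁ l₂ α₁ α₂ y₀,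
          gstar_comb G l₁ l₂ x₁ x₂ β₀, smul_add, smul_add, smul_add, smul_add]
        abel
      have hsne : s ≠ 0 := hspos.ne'
      have hθ₁ne : (1 + G.pstar α₁ y₀ + G.pstar x₁ β₀) ≠ 0 := hθ₁pos.ne'
      have hθ₂ne : (1 + G.pstar α₂ y₀ + G.pstar x₂ β₀) ≠ 0 := hθ₂pos.ne'
      unfold phi
      rw [hD, hN, inv_inv, hl₁, hl₂]
      match_scalars <;> field_simp <;> ring
  · -- Subset of closed unit ball
    rintro z ⟨x, hx, α, hα, rfl⟩
    rw [Metric.mem_closedBall, dist_zero_right]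
    have hpα := pstar_nonneg G hα hy₀n
    have hpx := pstar_nonneg G hx.1 hβ₀
    have hθpos : (0 : ℝ) < 1 + G.pstar α y₀ + G.pstar x β₀ := by positivity
    have hN : ‖G.mix x y₀ + G.gstar α y₀ + G.gstar x β₀‖
        ≤ 1 + G.pstar α y₀ + G.pstar x β₀ := by
      have h1 : ‖G.mix x y₀‖ ≤ 1 := by
        have := norm_mix_le G hg hx.1 hy₀n
        rwa [hx.2, hy₀.2, one_mul] at this
      have h2 := norm_gstar_le G hg hα hy₀n
      have h3 := norm_gstar_le G hg hx.1 hβ₀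
      calc ‖G.mix x y₀ + G.gstar α y₀ + G.gstar x β₀‖
          ≤ ‖G.mix x y₀‖ + ‖G.gstar α y₀‖ + ‖G.gstar x β₀‖ :=
            (norm_add_le _ _).trans (by gcongr; exact norm_add_le _ _)
        _ ≤ 1 + G.pstar α y₀ + G.pstar x β₀ := by gcongr
    unfold phi
    rw [norm_smul, Real.norm_eq_abs, abs_of_pos (inv_pos.2 hθpos)]
    rw [inv_mul_le_iff₀ hθpos, mul_one]
    exact hN

end
end

section
/- Consider the Big-Match game of type II with player 1's (non-quitting) actions {T,B}, player 2's actions {L*,R} where L* is quitting and R is non-quitting, and scalar payoffs g(T,L*) = 1, g(T,R) = 0, g(B,L*) = 0, g(B,R) = −1. There exists λ* ∈ (0,1) such that for every λ ∈ (0,λ*) and every strategy σ of player 1, there is a strategy τ of player 2 with ḡ^λ_∞(σ,τ) ∉ [−1/(2e), 1/(2e)]. Consequently, the set {0} is not weakly approachable by player 1 for the discounted evaluations. -/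
/-!
Fix `σ`, let `u t` be the probability that player 1 plays `T` at stage `t` while player 2 keeps
playing `R`, write `q = 1 - λ`, `c = 1/(2e)` and `A k = ∑_{t<k} λ q^t u t`. Against "never quit"
the payoff is `∑ λ q^t u t - 1`, so keeping it `≥ -c` forces `T` to be played often; against
"quit at stage `k`" it is `A k - (1 - q^k) + q^k u k`, so keeping it `≤ c` forces `T` to be
played rarely. Together these give `(k+1) λ q^k + c q^(k+1) ≤ 2c` for every `k`, whereas for
`k = ⌊1/λ⌋` and small `λ` the left side is about `1/e + c/e > 1/e = 2c`.
-/

noncomputable section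

namespace BigMatchIIExample

/-- Payoffs of the Big-Match game of type II: `true` = `T`, `false` = `B` for player 1;
`true` = `L*` (quitting), `false` = `R` (non-quitting) for player 2.
`g T L* = 1, g T R = 0, g B L* = 0, g B R = −1`. -/
def g : Bool → Bool → ℝ := fun i j =>
  if i then (if j then 1 else 0) else (if j then 0 else -1)

/-- Expected payoff of the stage `n` steps ahead of the current one, given the unabsorbed
history `h` of player 1's realized past actions (player 2 having played `R` so far);
`σ h` is the probability of `T` and `τ h` the probability of the quitting action `L*`.
From the first stage at which `L*` is played, the action pair is frozen forever. -/
def stageVal (σ τ : List Bool → ℝ) : ℕ → List Bool → ℝ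
  | 0, h => ∑ i : Bool, ∑ j : Bool,
      (if i then σ h else 1 - σ h) * (if j then τ h else 1 - τ h) * g i j
  | n + 1, h => ∑ i : Bool, ∑ j : Bool,
      (if i then σ h else 1 - σ h) * (if j then τ h else 1 - τ h) *
        (if j then g i j else stageVal σ τ n (h ++ [i]))

/-- Expected `λ`-discounted payoff `ḡ^λ_∞(σ,τ) = Σ_{t=1}^∞ λ(1−λ)^{t−1} E_{σ,τ}[g(i_t,j_t)]`. -/
def disc (lam : ℝ) (σ τ : List Bool → ℝ) : ℝ :=
  ∑' t : ℕ, lam * (1 - lam) ^ t * stageVal σ τ t []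

/-- A behavioral strategy assigns a probability (of `T`, resp. of `L*`) to each history. -/
def ValidStrat (σ : List Bool → ℝ) : Prop := ∀ h, σ h ∈ Set.Icc (0 : ℝ) 1


open Finset

/-- Probability that player 1 plays `T` at the stage `n` steps after the history `h`, as long as
player 2 keeps playing `R`. -/
def probT (σ : List Bool → ℝ) : ℕ → List Bool → ℝ
  | 0, h => σ h
  | n + 1, h => σ h * probT σ n (h ++ [true]) + (1 - σ h) * probT σ n (h ++ [false])

lemma probT_mem_Icc {σ : List Bool → ℝ} (hσ : ValidStrat σ) (n : ℕ) (h : List Bool) :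
    probT σ n h ∈ Set.Icc (0 : ℝ) 1 := by
  induction n generalizing h with
  | zero => exact hσ h
  | succ n ih =>
    obtain ⟨hσ0, hσ1⟩ := hσ h
    obtain ⟨ht0, ht1⟩ := ih (h ++ [true])
    obtain ⟨hf0, hf1⟩ := ih (h ++ [false])
    constructor <;> simp only [probT] <;> nlinarith

section OneStage

variable {σ τ : List Bool → ℝ} {h : List Bool}

lemma stageVal_of_quit (hτ : τ h = 1) (n : ℕ) : stageVal σ τ n h = σ h := by
  cases n <;> simp [stageVal, g, hτ]

lemma stageVal_zero_of_continue (hτ : τ h = 0) : stageVal σ τ 0 h = σ h - 1 := by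
  simp [stageVal, g, hτ]

lemma stageVal_succ_of_continue (hτ : τ h = 0) (n : ℕ) :
    stageVal σ τ (n + 1) h =
      σ h * stageVal σ τ n (h ++ [true]) + (1 - σ h) * stageVal σ τ n (h ++ [false]) := by
  simp [stageVal, hτ]

end OneStage

lemma stageVal_neverQuit (σ : List Bool → ℝ) (n : ℕ) (h : List Bool) :
    stageVal σ (fun _ => 0) n h = probT σ n h - 1 := by
  induction n generalizing h with
  | zero => exact stageVal_zero_of_continue rfl
  | succ n ih =>
    rw [stageVal_succ_of_continue rfl, ih, ih, probT]
    ring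

def quitAt (k : ℕ) : List Bool → ℝ := fun h => if h.length = k then 1 else 0

lemma validStrat_quitAt (k : ℕ) : ValidStrat (quitAt k) := by
  intro h
  unfold quitAt
  split_ifs <;> norm_num

lemma stageVal_quitAt (σ : List Bool → ℝ) {k : ℕ} (n m : ℕ) (h : List Bool)
    (hm : h.length + m = k) :
    stageVal σ (quitAt k) n h = if n < m then probT σ n h - 1 else probT σ m h := by
  rcases m with _ | m
  · rw [stageVal_of_quit (by simp [quitAt, ← hm]), if_neg (Nat.not_lt_zero n), probT]
  have hτ : quitAt k h = 0 := by simp [quitAt, ← hm]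
  cases n with
  | zero => simp [stageVal_zero_of_continue hτ, probT]
  | succ n =>
    have hlen : ∀ b : Bool, (h ++ [b]).length + m = k := by simp [← hm]; omega
    rw [stageVal_succ_of_continue hτ, stageVal_quitAt σ n m _ (hlen true),
      stageVal_quitAt σ n m _ (hlen false)]
    by_cases hnm : n < m
    · simp only [if_pos hnm, if_pos (Nat.succ_lt_succ hnm), probT]
      ring
    · simp only [if_neg hnm, if_neg (fun h => hnm (Nat.lt_of_succ_lt_succ h)), probT]

section Discount

variable {lam : ℝ}

def discSum (lam : ℝ) (b : ℕ → ℝ) : ℝ := ∑' t, lam * (1 - lam) ^ t * b t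

lemma discount_weight_nonneg (hl0 : 0 < lam) (hl1 : lam ≤ 1) (t : ℕ) :
    0 ≤ lam * (1 - lam) ^ t :=
  mul_nonneg hl0.le (pow_nonneg (sub_nonneg.2 hl1) t)

lemma summable_discount (hl0 : 0 < lam) (hl1 : lam ≤ 1) {b : ℕ → ℝ} {M : ℝ}
    (hb : ∀ t, |b t| ≤ M) : Summable fun t => lam * (1 - lam) ^ t * b t := by
  refine Summable.of_norm_bounded
    (((summable_geometric_of_lt_one (r := 1 - lam) (by linarith) (by linarith)).mul_left
      lam).mul_right M) fun t => ?_
  rw [Real.norm_eq_abs, abs_mul, abs_of_nonneg (discount_weight_nonneg hl0 hl1 t)]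
  exact mul_le_mul_of_nonneg_left (hb t) (discount_weight_nonneg hl0 hl1 t)

lemma discSum_const (hl0 : 0 < lam) (hl1 : lam ≤ 1) (a : ℝ) : discSum lam (fun _ => a) = a := by
  rw [discSum, tsum_mul_right, tsum_mul_left,
    tsum_geometric_of_lt_one (by linarith) (by linarith), sub_sub_cancel,
    mul_inv_cancel₀ hl0.ne', one_mul]

lemma discSum_sub_const (hl0 : 0 < lam) (hl1 : lam ≤ 1) {b : ℕ → ℝ} {M : ℝ}
    (hb : ∀ t, |b t| ≤ M) (a : ℝ) : discSum lam (fun t => b t - a) = discSum lam b - a := by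
  have hconst : Summable fun t => lam * (1 - lam) ^ t * a :=
    summable_discount hl0 hl1 (b := fun _ => a) (fun _ => le_refl |a|)
  calc discSum lam (fun t => b t - a) = discSum lam b - discSum lam (fun _ => a) := by
        simp only [discSum, mul_sub]
        exact (summable_discount hl0 hl1 hb).tsum_sub hconst
    _ = discSum lam b - a := by rw [discSum_const hl0 hl1]

lemma discSum_le_discSum (hl0 : 0 < lam) (hl1 : lam ≤ 1) {b b' : ℕ → ℝ} {M M' : ℝ}
    (hb : ∀ t, |b t| ≤ M) (hb' : ∀ t, |b' t| ≤ M') (hle : ∀ t, b t ≤ b' t) :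
    discSum lam b ≤ discSum lam b' :=
  (summable_discount hl0 hl1 hb).tsum_le_tsum
    (fun t => mul_le_mul_of_nonneg_left (hle t) (discount_weight_nonneg hl0 hl1 t))
    (summable_discount hl0 hl1 hb')

lemma discSum_eq_sum_range_add (hl0 : 0 < lam) (hl1 : lam ≤ 1) {b : ℕ → ℝ} {M : ℝ}
    (hb : ∀ t, |b t| ≤ M) (k : ℕ) :
    discSum lam b = ∑ t ∈ range k, lam * (1 - lam) ^ t * b t
      + (1 - lam) ^ k * discSum lam (fun t => b (t + k)) := by
  rw [discSum, ← (summable_discount hl0 hl1 hb).sum_add_tsum_nat_add k, discSum,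
    ← tsum_mul_left]
  congr 1
  refine tsum_congr fun t => ?_
  ring

end Discount

section Payoffs

variable {lam : ℝ} {σ : List Bool → ℝ}

lemma disc_eq_discSum (τ : List Bool → ℝ) :
    disc lam σ τ = discSum lam (fun t => stageVal σ τ t []) := rfl

lemma abs_probT_le_one (hσ : ValidStrat σ) (n : ℕ) (h : List Bool) : |probT σ n h| ≤ 1 := by
  obtain ⟨h0, h1⟩ := probT_mem_Icc hσ n h
  exact abs_le.2 ⟨by linarith, h1⟩

lemma disc_neverQuit (hl0 : 0 < lam) (hl1 : lam ≤ 1) (hσ : ValidStrat σ) :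
    disc lam σ (fun _ => 0) = discSum lam (fun t => probT σ t []) - 1 := by
  simp only [disc_eq_discSum, stageVal_neverQuit]
  exact discSum_sub_const hl0 hl1 (fun t => abs_probT_le_one hσ t []) 1

lemma disc_quitAt (hl0 : 0 < lam) (hl1 : lam ≤ 1) (hσ : ValidStrat σ) (k : ℕ) :
    disc lam σ (quitAt k) = ∑ t ∈ range k, lam * (1 - lam) ^ t * (probT σ t [] - 1)
      + (1 - lam) ^ k * probT σ k [] := by
  have hstage : ∀ t, stageVal σ (quitAt k) t [] =
      if t < k then probT σ t [] - 1 else probT σ k [] :=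
    fun t => stageVal_quitAt σ t k [] (zero_add k)
  have hb : ∀ t, |if t < k then probT σ t [] - 1 else probT σ k []| ≤ 1 := by
    intro t
    obtain ⟨ht0, ht1⟩ := probT_mem_Icc hσ t []
    split_ifs
    · exact abs_le.2 ⟨by linarith, by linarith⟩
    · exact abs_probT_le_one hσ k []
  simp only [disc_eq_discSum, hstage]
  rw [discSum_eq_sum_range_add hl0 hl1 hb k]
  congr 1
  · exact sum_congr rfl fun t ht => by rw [if_pos (mem_range.1 ht)]
  · have hshift : (fun t => if t + k < k then probT σ (t + k) [] - 1 else probT σ k []) =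
        fun _ => probT σ k [] := funext fun t => if_neg (by omega)
    rw [hshift, discSum_const hl0 hl1]

end Payoffs

section Bound

variable {lam c : ℝ} {u : ℕ → ℝ}

lemma sum_range_succ_discount_le (hl0 : 0 < lam) (hl1 : lam ≤ 1)
    (hquit : ∀ k, ∑ t ∈ range k, lam * (1 - lam) ^ t * (u t - 1) + (1 - lam) ^ k * u k ≤ c)
    (k : ℕ) :
    ∑ t ∈ range (k + 1), lam * (1 - lam) ^ t * u t
      ≤ (1 + c) * (1 - (1 - lam) ^ (k + 1)) - (k + 1) * lam * (1 - lam) ^ k := by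
  set A : ℕ → ℝ := fun k => ∑ t ∈ range k, lam * (1 - lam) ^ t * u t with hA
  have hgeom : ∀ k, ∑ t ∈ range k, lam * (1 - lam) ^ t = 1 - (1 - lam) ^ k := fun k => by
    rw [← mul_sum, ← mul_neg_geom_sum, sub_sub_cancel]
  have hstep : ∀ k, A (k + 1) ≤ (1 - lam) * A k + lam * (1 + c - (1 - lam) ^ k) := by
    intro k
    have h := hquit k
    simp only [mul_sub, mul_one, sum_sub_distrib, hgeom] at h
    have : lam * ((1 - lam) ^ k * u k) ≤ lam * (c + 1 - (1 - lam) ^ k - A k) :=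
      mul_le_mul_of_nonneg_left (by linarith) hl0.le
    simp only [hA, sum_range_succ] at this ⊢
    linarith
  induction k with
  | zero =>
    have h := hstep 0
    simp only [hA, sum_range_zero, mul_zero, zero_add, pow_zero, pow_one, Nat.cast_zero] at h ⊢
    linarith
  | succ k ih =>
    push_cast
    calc A (k + 1 + 1) ≤ (1 - lam) * A (k + 1) + lam * (1 + c - (1 - lam) ^ (k + 1)) := hstep _
      _ ≤ (1 - lam) * ((1 + c) * (1 - (1 - lam) ^ (k + 1)) - (k + 1) * lam * (1 - lam) ^ k)
          + lam * (1 + c - (1 - lam) ^ (k + 1)) := by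
        gcongr
      _ = (1 + c) * (1 - (1 - lam) ^ (k + 1 + 1)) - (k + 1 + 1) * lam * (1 - lam) ^ (k + 1) := by
        ring

lemma succ_mul_pow_add_le (hl0 : 0 < lam) (hl1 : lam ≤ 1)
    (hu : ∀ t, u t ∈ Set.Icc (0 : ℝ) 1) (hnever : 1 - c ≤ discSum lam u)
    (hquit : ∀ k, ∑ t ∈ range k, lam * (1 - lam) ^ t * (u t - 1) + (1 - lam) ^ k * u k ≤ c)
    (k : ℕ) : (k + 1) * lam * (1 - lam) ^ k + c * (1 - lam) ^ (k + 1) ≤ 2 * c := by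
  have hb : ∀ t, |u t| ≤ 1 := fun t => abs_le.2 ⟨by linarith [(hu t).1], (hu t).2⟩
  have htail : discSum lam (fun t => u (t + (k + 1))) ≤ 1 :=
    (discSum_le_discSum hl0 hl1 (fun t => hb _) (b' := fun _ => 1) (fun _ => le_refl |1|)
      (fun t => (hu _).2)).trans_eq (discSum_const hl0 hl1 1)
  have hsplit := discSum_eq_sum_range_add hl0 hl1 hb (k + 1)
  have hq :
      (1 - lam) ^ (k + 1) * discSum lam (fun t => u (t + (k + 1))) ≤ (1 - lam) ^ (k + 1) :=
    mul_le_of_le_one_right (pow_nonneg (sub_nonneg.2 hl1) _) htail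
  linarith [sum_range_succ_discount_le hl0 hl1 hquit k]

end Bound

lemma exp_neg_mul_div_le_one_sub_pow {x : ℝ} (hx : x < 1) (k : ℕ) :
    Real.exp (-(k * x / (1 - x))) ≤ (1 - x) ^ k := by
  have hx' : 0 < 1 - x := by linarith
  have h1 : Real.exp (-(x / (1 - x))) ≤ 1 - x := by
    rw [Real.exp_neg, inv_le_comm₀ (Real.exp_pos _) hx']
    calc (1 - x)⁻¹ = x / (1 - x) + 1 := by field_simp; ring
      _ ≤ Real.exp (x / (1 - x)) := Real.add_one_le_exp _
  calc Real.exp (-(k * x / (1 - x))) = Real.exp (-(x / (1 - x))) ^ k := by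
        rw [← Real.exp_nat_mul]; ring_nf
    _ ≤ (1 - x) ^ k := pow_le_pow_left₀ (Real.exp_pos _).le h1 k

lemma exists_two_mul_lt_succ_mul_pow_add {lam : ℝ} (hl0 : 0 < lam) (hl : lam ≤ 1 / 100) :
    ∃ k : ℕ, 2 * (1 / (2 * Real.exp 1)) <
      (k + 1) * lam * (1 - lam) ^ k + 1 / (2 * Real.exp 1) * (1 - lam) ^ (k + 1) := by
  set c := 1 / (2 * Real.exp 1) with hc
  have hc6 : 1 / 6 ≤ c := by
    rw [hc, div_le_div_iff₀ (by norm_num) (by positivity)]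
    linarith [Real.exp_one_lt_d9]
  have h2c : 2 * c = Real.exp (-1) := by
    rw [hc, Real.exp_neg]
    field_simp
  refine ⟨⌊1 / lam⌋₊, ?_⟩
  set k := ⌊1 / lam⌋₊
  have hk1 : 1 ≤ (k + 1) * lam := by
    have := Nat.lt_floor_add_one (1 / lam)
    rw [div_lt_iff₀ hl0] at this
    linarith
  have hk2 : k * lam ≤ 1 := (le_div_iff₀ hl0).1 (Nat.floor_le (by positivity))
  -- `k ≈ 1/λ` steps of `1 - λ` cost a factor of only about `1/e`.
  have hpow : Real.exp (-1) * (1 - 2 * lam) ≤ (1 - lam) ^ k := by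
    have hexp : k * lam / (1 - lam) ≤ 1 + 2 * lam := by
      rw [div_le_iff₀ (by linarith)]
      nlinarith
    calc Real.exp (-1) * (1 - 2 * lam) ≤ Real.exp (-1) * Real.exp (-(2 * lam)) := by
          gcongr
          exact Real.one_sub_le_exp_neg _
      _ = Real.exp (-1 - 2 * lam) := by rw [← Real.exp_add]; ring_nf
      _ ≤ Real.exp (-(k * lam / (1 - lam))) := Real.exp_le_exp.2 (by linarith)
      _ ≤ (1 - lam) ^ k := exp_neg_mul_div_le_one_sub_pow (by linarith) k
  have hcq : 33 / 200 ≤ c * (1 - lam) := by nlinarith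
  have hcq' : c * (1 - lam) ≤ 1 := by
    have : c ≤ 1 := by
      rw [hc, div_le_one (by positivity)]
      linarith [Real.add_one_le_exp 1]
    nlinarith
  have hmargin : 1 < (1 - 2 * lam) * (1 + c * (1 - lam)) := by
    nlinarith [mul_le_mul_of_nonneg_left hcq' hl0.le]
  calc 2 * c = Real.exp (-1) * 1 := by rw [h2c, mul_one]
    _ < Real.exp (-1) * ((1 - 2 * lam) * (1 + c * (1 - lam))) := by gcongr
    _ ≤ (1 - lam) ^ k * (1 + c * (1 - lam)) := by
        rw [← mul_assoc]
        gcongr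
    _ ≤ (k + 1) * lam * (1 - lam) ^ k + c * (1 - lam) ^ (k + 1) := by
        rw [pow_succ]
        nlinarith [pow_nonneg (by linarith : (0 : ℝ) ≤ 1 - lam) k]

lemma exists_disc_not_mem_Icc {lam : ℝ} (hl0 : 0 < lam) (hl : lam ≤ 1 / 100)
    {σ : List Bool → ℝ} (hσ : ValidStrat σ) :
    ∃ τ, ValidStrat τ ∧
      disc lam σ τ ∉ Set.Icc (-(1 / (2 * Real.exp 1))) (1 / (2 * Real.exp 1)) := by
  by_contra! hall
  have hl1 : lam ≤ 1 := by linarith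
  have hnever := (hall (fun _ => 0) fun _ => by norm_num).1
  rw [disc_neverQuit hl0 hl1 hσ] at hnever
  have hquit : ∀ k, ∑ t ∈ range k, lam * (1 - lam) ^ t * (probT σ t [] - 1)
      + (1 - lam) ^ k * probT σ k [] ≤ 1 / (2 * Real.exp 1) := fun k => by
    rw [← disc_quitAt hl0 hl1 hσ]
    exact (hall _ (validStrat_quitAt k)).2
  obtain ⟨k, hk⟩ := exists_two_mul_lt_succ_mul_pow_add hl0 hl
  exact hk.not_ge <| succ_mul_pow_add_le hl0 hl1 (fun t => probT_mem_Icc hσ t [])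
    (by linarith) hquit k

/-- there is `λ* ∈ (0,1)` such that for every `λ ∈ (0,λ*)` and every
strategy `σ` of player 1 there is a strategy `τ` of player 2 with
`ḡ^λ_∞(σ,τ) ∉ [−1/(2e), 1/(2e)]`; consequently `{0}` is not weakly approachable by
player 1 for the discounted evaluations. -/
theorem not_weakly_approachable_discounted :
    (∃ lamStar ∈ Set.Ioo (0:ℝ) 1, ∀ lam ∈ Set.Ioo (0:ℝ) lamStar,
      ∀ σ : List Bool → ℝ, ValidStrat σ →
        ∃ τ : List Bool → ℝ, ValidStrat τ ∧
          disc lam σ τ ∉ Set.Icc (-(1 / (2 * Real.exp 1))) (1 / (2 * Real.exp 1))) ∧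
    ¬ (∀ ε > (0:ℝ), ∃ lam₀ ∈ Set.Ioo (0:ℝ) 1, ∀ lam ∈ Set.Ioo (0:ℝ) lam₀,
        ∃ σ : List Bool → ℝ, ValidStrat σ ∧ ∀ τ : List Bool → ℝ, ValidStrat τ →
          |disc lam σ τ| ≤ ε) := by
  refine ⟨⟨1 / 100, ⟨by norm_num, by norm_num⟩,
    fun lam hlam σ hσ => exists_disc_not_mem_Icc hlam.1 hlam.2.le hσ⟩, fun happroach => ?_⟩
  obtain ⟨lam₀, hlam₀, happrox⟩ :=
    happroach _ (by positivity : (0 : ℝ) < 1 / (2 * Real.exp 1))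
  have hlam : 0 < min lam₀ (1 / 100) / 2 := by
    have := lt_min hlam₀.1 (by norm_num : (0 : ℝ) < 1 / 100)
    positivity
  obtain ⟨σ, hσ, hbound⟩ := happrox _ ⟨hlam, by linarith [min_le_left lam₀ (1 / 100)]⟩
  obtain ⟨τ, hτ, hnot⟩ :=
    exists_disc_not_mem_Icc hlam (by linarith [min_le_right lam₀ (1 / 100)]) hσ
  exact hnot (abs_le.1 (hbound τ hτ))

end BigMatchIIExample

end
end

section
/- Let λ ∈ (0,1), ε > 0, and let (p_k)_{k≥1} be a sequence with p_k ∈ [0,1] for all k. Define z_k = ε + (k−1)·λ/(1−λ). Suppose that for every k ≥ 1: Σ_{t=1}^{k−1} λ(1−λ)^{t−1}(p_t − 1) + (1−λ)^{k−1} p_k ≤ ε. Then for every k ≥ 1: Σ_{t=1}^{k} λ(1−λ)^{t−1}(p_t − 1) ≤ ε − λ(1−λ)^{k−1} − (1−λ)^k z_k. -/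
/-- let `λ ∈ (0,1)`, `ε > 0`, `(p_k)_{k≥1}` a sequence in `[0,1]` and
`z_k = ε + (k−1)·λ/(1−λ)`. If for every `k ≥ 1` the total expected `λ`-discounted payoff
when the opponent absorbs at stage `k`, namely
`Σ_{t=1}^{k−1} λ(1−λ)^{t−1}(p_t − 1) + (1−λ)^{k−1} p_k`, is at most `ε`, then for every
`k ≥ 1` the unabsorbed expected `λ`-discounted payoff up to stage `k` satisfies
`Σ_{t=1}^{k} λ(1−λ)^{t−1}(p_t − 1) ≤ ε − λ(1−λ)^{k−1} − (1−λ)^k z_k`. -/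
theorem discounted_markov_bound (lam ε : ℝ) (hlam : lam ∈ Set.Ioo (0:ℝ) 1) (hε : 0 < ε)
    (p : ℕ → ℝ) (hp : ∀ k : ℕ, 1 ≤ k → p k ∈ Set.Icc (0:ℝ) 1)
    (z : ℕ → ℝ) (hz : ∀ k : ℕ, z k = ε + ((k : ℝ) - 1) * (lam / (1 - lam)))
    (habs : ∀ k : ℕ, 1 ≤ k →
      (∑ t ∈ Finset.range (k - 1), lam * (1 - lam) ^ t * (p (t + 1) - 1))
        + (1 - lam) ^ (k - 1) * p k ≤ ε) :
    ∀ k : ℕ, 1 ≤ k →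
      ∑ t ∈ Finset.range k, lam * (1 - lam) ^ t * (p (t + 1) - 1)
        ≤ ε - lam * (1 - lam) ^ (k - 1) - (1 - lam) ^ k * z k := by
  obtain ⟨hl0, hl1⟩ := hlam
  have h1l : 0 < 1 - lam := by linarith
  intro k hk
  obtain ⟨n, rfl⟩ : ∃ n, k = n + 1 := ⟨k - 1, (Nat.succ_pred_eq_of_pos hk).symm⟩
  clear hk
  induction n with
  | zero =>
    have h := habs 1 le_rfl
    simp only [Nat.sub_self, Finset.range_zero, Finset.sum_empty, pow_zero, one_mul,
      zero_add] at h
    have hz1 : z 1 = ε := by rw [hz 1]; push_cast; ring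
    rw [Finset.sum_range_one, hz1]
    norm_num
    nlinarith
  | succ n ih =>
    have hB : (0:ℝ) < (1 - lam) ^ n := pow_pos h1l _
    set B : ℝ := (1 - lam) ^ n with hBdef
    have hAB : (1 - lam) ^ (n + 1) = (1 - lam) * B := by rw [hBdef]; ring
    have hpow2 : (1 - lam) ^ (n + 2) = (1 - lam) * ((1 - lam) * B) := by rw [hBdef]; ring
    have hzrec : (1 - lam) * z (n + 2) = (1 - lam) * z (n + 1) + lam := by
      rw [hz (n + 2), hz (n + 1)]
      push_cast
      field_simp
      ring
    have hsum : ∑ t ∈ Finset.range (n + 2), lam * (1 - lam) ^ t * (p (t + 1) - 1)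
        = (∑ t ∈ Finset.range (n + 1), lam * (1 - lam) ^ t * (p (t + 1) - 1))
          + lam * ((1 - lam) * B) * (p (n + 2) - 1) := by
      rw [Finset.sum_range_succ, hAB]
    have habs2 := habs (n + 2) (by omega)
    simp only [show n + 2 - 1 = n + 1 from rfl, hAB] at habs2
    simp only [show n + 1 + 1 = n + 2 from rfl, show n + 2 - 1 = n + 1 from rfl, Nat.add_sub_cancel, hAB, hpow2] at ih ⊢
    rw [hsum]
    obtain ⟨hp0, hp1⟩ := hp (n + 2) (by omega)
    rcases le_or_gt (z (n + 2)) (p (n + 2)) with hcase | hcase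
    · -- use habs2
      nlinarith [mul_le_mul_of_nonneg_left hcase (mul_pos h1l (mul_pos h1l hB)).le]
    · -- use ih
      have h5 : lam * B * ((1 - lam) * z (n + 2)) = lam * B * ((1 - lam) * z (n + 1) + lam) := by
        rw [hzrec]
      have h6 : lam * ((1 - lam) * B) * p (n + 2) ≤ lam * ((1 - lam) * B) * z (n + 2) :=
        mul_le_mul_of_nonneg_left hcase.le (by positivity)
      nlinarith [h5, h6]
end

section
/- Let p ≥ 1 be a real number and define ξ : [0,1] → ℝ by ξ(t) = (1/p)·(1 − (1−t)^p). Then ξ(0) = 0, ξ(t) ∈ [0,1] for every t ∈ [0,1], and for every t ∈ [0,1]: ∫_0^t ( p·ξ(s) − (1 − ξ(s)) ) ds + (1−t)·ξ(t) = 0. -/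
open Real intervalIntegral

theorem integral_one_sub_rpow {p : ℝ} (hp : -1 < p) (t : ℝ) :
    ∫ s in (0:ℝ)..t, (1 - s) ^ p = (1 - (1 - t) ^ (p + 1)) / (p + 1) := by
  rw [integral_comp_sub_left (fun x : ℝ => x ^ p), integral_rpow (Or.inl hp)]
  norm_num [one_rpow]

/-- The continuous-time strategy `ξ` of the paper. -/
noncomputable def topActionProb (p t : ℝ) : ℝ := (1 / p) * (1 - (1 - t) ^ p)

theorem integral_payoff_topActionProb {p : ℝ} (hp : -1 < p) (hp0 : p ≠ 0) (t : ℝ) :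
    ∫ s in (0:ℝ)..t, (p * topActionProb p s - (1 - topActionProb p s))
      = (t - 1 + (1 - t) ^ (p + 1)) / p := by
  have hint : IntervalIntegrable (fun s : ℝ => (1 - s) ^ p) MeasureTheory.volume 0 t := by
    simpa using (intervalIntegrable_rpow' (a := 1) (b := 1 - t) hp).comp_sub_left 1
  have hintegrand : ∀ s, p * topActionProb p s - (1 - topActionProb p s)
      = 1 / p - (1 + 1 / p) * (1 - s) ^ p := fun s => by
    unfold topActionProb
    field_simp
    ring
  simp only [hintegrand]
  rw [integral_sub intervalIntegrable_const (hint.const_mul _), integral_const_mul,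
    integral_one_sub_rpow hp, intervalIntegral.integral_const, sub_zero, smul_eq_mul]
  have hp1 : p + 1 ≠ 0 := by linarith
  field_simp
  ring

theorem topActionProb_mem_Icc {p t : ℝ} (hp : 1 ≤ p) (ht : t ∈ Set.Icc (0:ℝ) 1) :
    topActionProb p t ∈ Set.Icc (0:ℝ) 1 := by
  obtain ⟨ht0, ht1⟩ := ht
  have hp0 : 0 < p := by linarith
  have h0 : 0 ≤ (1 - t) ^ p := rpow_nonneg (by linarith) p
  have h1 : (1 - t) ^ p ≤ 1 := rpow_le_one (by linarith) (by linarith) hp0.le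
  exact ⟨mul_nonneg (by positivity) (by linarith),
    mul_le_one₀ ((div_le_one hp0).2 hp) (by linarith) (by linarith)⟩

/-- for a real `p ≥ 1`, the function `ξ(t) = (1/p)(1 − (1−t)^p)` (real
exponentiation) satisfies `ξ(0) = 0`, `ξ(t) ∈ [0,1]` for `t ∈ [0,1]`, and the
continuous-time approachability identity
`∫_0^t (p·ξ(s) − (1 − ξ(s))) ds + (1−t)·ξ(t) = 0` for every `t ∈ [0,1]`. -/
theorem xi_solves_continuous_time_equation (p : ℝ) (hp : 1 ≤ p) (ξ : ℝ → ℝ)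
    (hξ : ∀ t : ℝ, ξ t = (1 / p) * (1 - (1 - t) ^ p)) :
    ξ 0 = 0 ∧ (∀ t ∈ Set.Icc (0:ℝ) 1, ξ t ∈ Set.Icc (0:ℝ) 1) ∧
    ∀ t ∈ Set.Icc (0:ℝ) 1,
      (∫ s in (0:ℝ)..t, (p * ξ s - (1 - ξ s))) + (1 - t) * ξ t = 0 := by
  have hp0 : 0 < p := by linarith
  obtain rfl : ξ = topActionProb p := funext hξ
  refine ⟨by simp [topActionProb], fun t ht => topActionProb_mem_Icc hp ht, fun t ht => ?_⟩
  rw [integral_payoff_topActionProb (by linarith) hp0.ne', topActionProb,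
    rpow_add_one' (by linarith [ht.2]) (by linarith)]
  field_simp
  ring
end

section
/- Consider the generalized quitting game with player 1's non-quitting actions {T,B} (no quitting actions), player 2's quitting action L* and non-quitting action R, and scalar payoffs g(T,L*) = 1, g(T,R) = 0, g(B,L*) = 0, g(B,R) = −1. The set C = {0} ⊆ ℝ satisfies Condition (3): max_{y∈Δ(J)} sup_{β∈𝓜(J)} min_{x∈Δ(I)} inf_{α∈𝓜(I)} d_C(φ(x,α,y,β)) = 0. In fact, for every y ∈ Δ({L*,R}) and β ∈ 𝓜({L*,R}), taking x = ( y_R/(1+β_{L*}) , (y_{L*}+β_{L*})/(1+β_{L*}) ) ∈ Δ({T,B}) and α = 0 gives g(x,y) + g*(α,y) + g*(x,β) = 0. -/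
noncomputable section

namespace Example6

/-- Payoffs: `true` = `T`, `false` = `B` for player 1 (both non-quitting);
`true` = `L*` (quitting), `false` = `R` (non-quitting) for player 2.
`g(T,L*) = 1, g(T,R) = 0, g(B,L*) = 0, g(B,R) = −1`. -/
def g : Bool → Bool → ℝ := fun i j =>
  if i then (if j then 1 else 0) else (if j then 0 else -1)

/-- Bilinear extension of `g`. -/
def mix (x y : Bool → ℝ) : ℝ := ∑ i : Bool, ∑ j : Bool, x i * y j * g i j

/-- Measure of absorption `p*`: a pair `(i,j)` is absorbing iff `j = L*`. -/
def pstar (α β : Bool → ℝ) : ℝ := ∑ i : Bool, ∑ j : Bool, if j then α i * β j else 0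

/-- Expected absorption payoff `g*`. -/
def gstar (α β : Bool → ℝ) : ℝ := ∑ i : Bool, ∑ j : Bool, if j then α i * β j * g i j else 0

/-- `φ(x,α,y,β) = (g(x,y) + g*(α,y) + g*(x,β)) / (1 + p*(α,y) + p*(x,β))`. -/
def phi (x α y β : Bool → ℝ) : ℝ :=
  (1 + pstar α y + pstar x β)⁻¹ * (mix x y + gstar α y + gstar x β)

/-- The quantity of Condition (3): `max_y sup_β min_x inf_α d_C(φ(x,α,y,β))`. -/
def cond3Val (C : Set ℝ) : ℝ :=
  ⨆ y : stdSimplex ℝ Bool, ⨆ β : {b : Bool → ℝ // ∀ j, 0 ≤ b j},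
    ⨅ x : stdSimplex ℝ Bool, ⨅ α : {a : Bool → ℝ // ∀ i, 0 ≤ a i},
      Metric.infDist (phi x.1 α.1 y.1 β.1) C

/-- The witness `x = (y_R/(1+β_{L*}), (y_{L*}+β_{L*})/(1+β_{L*}))`: `x true` is the
probability of `T` and `x false` that of `B`; `y false = y_R`, `y true = y_{L*}`,
`β true = β_{L*}`. -/
def xWitness (y β : Bool → ℝ) : Bool → ℝ := fun i =>
  if i then y false / (1 + β true) else (y true + β true) / (1 + β true)

theorem cond3Val_eq_zero_of_forall_exists_phi_mem (C : Set ℝ)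
    (h : ∀ y ∈ stdSimplex ℝ Bool, ∀ β : Bool → ℝ, (∀ j, 0 ≤ β j) →
      ∃ x ∈ stdSimplex ℝ Bool, ∃ α : Bool → ℝ, (∀ i, 0 ≤ α i) ∧ phi x α y β ∈ C) :
    cond3Val C = 0 := by
  have hinner : ∀ (y : stdSimplex ℝ Bool) (β : {b : Bool → ℝ // ∀ j, 0 ≤ b j}),
      (⨅ x : stdSimplex ℝ Bool, ⨅ α : {a : Bool → ℝ // ∀ i, 0 ≤ a i},
        Metric.infDist (phi x.1 α.1 y.1 β.1) C) = 0 := by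
    rintro ⟨y, hy⟩ ⟨β, hβ⟩
    obtain ⟨x, hx, α, hα, hmem⟩ := h y hy β hβ
    refine le_antisymm ?_ (Real.iInf_nonneg fun _ => Real.iInf_nonneg fun _ => Metric.infDist_nonneg)
    exact Real.iInf_nonpos' ⟨⟨x, hx⟩, Real.iInf_nonpos' ⟨⟨α, hα⟩, (Metric.infDist_zero_of_mem hmem).le⟩⟩
  simp only [cond3Val, hinner, Real.iSup_const_zero]

theorem xWitness_mem_stdSimplex {y : Bool → ℝ} (hy : y ∈ stdSimplex ℝ Bool) {β : Bool → ℝ}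
    (hβ : 0 ≤ β true) : xWitness y β ∈ stdSimplex ℝ Bool := by
  obtain ⟨hy0, hy1⟩ := hy
  rw [Fintype.sum_bool] at hy1
  have hpos : 0 < 1 + β true := by linarith
  refine ⟨fun i => ?_, ?_⟩
  · cases i
    · exact div_nonneg (add_nonneg (hy0 true) hβ) hpos.le
    · exact div_nonneg (hy0 false) hpos.le
  · simp only [Fintype.sum_bool, xWitness, if_true, Bool.false_eq_true, if_false]
    field_simp
    linarith

/- The left side is `x_T (y_{L*} + β_{L*}) - x_B y_R`, which vanishes for
`x ∝ (y_R, y_{L*} + β_{L*})`. -/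
theorem mix_add_gstar_xWitness_eq_zero (y : Bool → ℝ) {β : Bool → ℝ} (hβ : 0 ≤ β true) :
    mix (xWitness y β) y + gstar (fun _ => (0:ℝ)) y + gstar (xWitness y β) β = 0 := by
  have hne : 1 + β true ≠ 0 := by positivity
  simp only [mix, gstar, xWitness, g, Fintype.sum_bool, if_true, Bool.false_eq_true, if_false]
  field_simp
  ring

/-- in this game, the set `C = {0} ⊆ ℝ` satisfies Condition (3); in fact,
for every `y ∈ Δ(J)` and `β ∈ 𝓜(J)`, taking `x = (y_R/(1+β_{L*}), (y_{L*}+β_{L*})/(1+β_{L*}))`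
(which lies in `Δ({T,B})`) and `α = 0` gives `g(x,y) + g*(α,y) + g*(x,β) = 0`. -/
theorem cond3_holds_for_zero :
    cond3Val ({0} : Set ℝ) = 0 ∧
    ∀ y ∈ stdSimplex ℝ Bool, ∀ β : Bool → ℝ, (∀ j, 0 ≤ β j) →
      xWitness y β ∈ stdSimplex ℝ Bool ∧
      mix (xWitness y β) y + gstar (fun _ => (0:ℝ)) y + gstar (xWitness y β) β = 0 := by
  refine ⟨cond3Val_eq_zero_of_forall_exists_phi_mem _ fun y hy β hβ =>
      ⟨xWitness y β, xWitness_mem_stdSimplex hy (hβ true), fun _ => 0, fun _ => le_rfl, ?_⟩,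
    fun y hy β hβ =>
      ⟨xWitness_mem_stdSimplex hy (hβ true), mix_add_gstar_xWitness_eq_zero y (hβ true)⟩⟩
  rw [Set.mem_singleton_iff, phi, mix_add_gstar_xWitness_eq_zero y (hβ true), mul_zero]

end Example6

end
end
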